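/- arXiv:2603.04693 — 2 statements merged into one kernel-verified Lean document; each statement's English description precedes it below -/
import Mathlib

section
/- Let R be an n-dimensional rectangle in ℝⁿ, x ∈ Int(R), and let 𝒫 be a minimal locally regulated partition of R about x with β_𝒫(x) ≥ 1. Then there exist 1 ≤ j ≤ n and distinct P, Q ∈ 𝒫 forming an e_j-pair, i.e., the boundary incidence sequences B_P(x) and B_Q(x) agree in every coordinate j′ ≠ j and their j-th entries are nonzero with opposite signs. -/
/-- An (full-dimensional) rectangle in `ι → ℝ`: a product of nondegenerate closed intervals. -/
def IsRect {ι : Type*} (R : Set (ι → ℝ)) : Prop :=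
  ∃ a b : ι → ℝ, (∀ i, a i < b i) ∧ R = Set.Icc a b

/-- `F` is a face of the rectangle `Q` with normal vector `e j`. -/
def IsFaceWithNormal {ι : Type*} (F Q : Set (ι → ℝ)) (j : ι) : Prop :=
  ∃ a b : ι → ℝ, (∀ i, a i < b i) ∧ Q = Set.Icc a b ∧
    (F = {y ∈ Q | y j = a j} ∨ F = {y ∈ Q | y j = b j})

/-- `F` is a face of the rectangle `Q`. -/
def IsFaceOf {ι : Type*} (F Q : Set (ι → ℝ)) : Prop :=
  ∃ j, IsFaceWithNormal F Q j

/-- `e j` is a boundary vector of `x` with respect to the collection `P`. -/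
def IsBoundaryVector {ι : Type*} (P : Set (Set (ι → ℝ))) (x : ι → ℝ) (j : ι) : Prop :=
  ∃ Q ∈ P, ∃ F, IsFaceWithNormal F Q j ∧ x ∈ F

/-- `ν_P(x)`: the number of members of `P` containing `x`. -/
noncomputable def nuP {ι : Type*} (P : Set (Set (ι → ℝ))) (x : ι → ℝ) : ℕ :=
  Set.ncard {Q | Q ∈ P ∧ x ∈ Q}

/-- `β_P(x)`: the number of boundary vectors of `x` with respect to `P`. -/
noncomputable def betaP {ι : Type*} (P : Set (Set (ι → ℝ))) (x : ι → ℝ) : ℕ :=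
  Set.ncard {j | IsBoundaryVector P x j}

/-- A locally regulated cover of `R`. -/
def IsLocRegCover {ι : Type*} (R : Set (ι → ℝ)) (P : Set (Set (ι → ℝ))) : Prop :=
  P.Finite ∧ (∀ Q ∈ P, IsRect Q) ∧ ⋃₀ P = R

/-- A locally regulated partition of `R`. -/
def IsLocRegPartition {ι : Type*} (R : Set (ι → ℝ)) (P : Set (Set (ι → ℝ))) : Prop :=
  IsLocRegCover R P ∧ ∀ Q₁ ∈ P, ∀ Q₂ ∈ P, Q₁ ≠ Q₂ → interior Q₁ ∩ interior Q₂ = ∅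

/-- The collection `P` is about `x` (inside `R`). -/
def IsAbout {ι : Type*} (R : Set (ι → ℝ)) (P : Set (Set (ι → ℝ))) (x : ι → ℝ) : Prop :=
  ∀ Q ∈ P, ∀ F, IsFaceOf F Q → x ∈ F ∨ ∃ G, IsFaceOf G R ∧ F ⊆ G

/-- A regulated partition of `ι → ℝ`. -/
def IsRegPartition {ι : Type*} (P : Set (Set (ι → ℝ))) : Prop :=
  (∃ (D : Set ℝ) (d : ℝ), 0 < d ∧ (∀ r₁ ∈ D, ∀ r₂ ∈ D, r₁ ≠ r₂ → d < |r₁ - r₂|) ∧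
    ∀ Q ∈ P, ∃ a b : ι → ℝ, (∀ i, a i ∈ D ∧ b i ∈ D ∧ a i < b i) ∧ Q = Set.Icc a b) ∧
  (∀ x : ι → ℝ, ∃ Q ∈ P, x ∈ Q) ∧
  (∀ Q₁ ∈ P, ∀ Q₂ ∈ P, Q₁ ≠ Q₂ → interior Q₁ ∩ interior Q₂ = ∅)

/-- `v` is the boundary incidence sequence of `x` with respect to the rectangle `Q`. -/
def IsBIS {ι : Type*} (Q : Set (ι → ℝ)) (x : ι → ℝ) (v : ι → ℤ) : Prop :=
  ∃ a b : ι → ℝ, (∀ i, a i < b i) ∧ Q = Set.Icc a b ∧ x ∈ Q ∧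
    ∀ j, v j = if x j = a j then 1 else if x j = b j then -1 else 0

/-!
Since `𝒫` is about `x`, every member through `x` is the box of `R` cut at `x` described by its
boundary incidence sequence `v ∈ {-1, 0, 1}ⁿ`, read as the subcube `{s | ∀ j, v j = 0 ∨ v j = s j}`
of the discrete cube `{±1}ⁿ`. Near `x` these boxes tile the `2ⁿ` orthants, so the sequences
partition the discrete cube into `ν` subcubes using `β` coordinates, and an `e_j`-pair is a pair of
twin subcubes.

Tarsi's lemma (via Hall's theorem) says a subcube partition has more cells than used coordinates.
In the minimal case, slicing along a used coordinate `j` gives two minimal partitions of a facet;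
by induction one of them has twins, which lift to twins or to an L-shaped pair in the coordinates
`j, l`. Recutting the L along `j` instead of `l` keeps a minimal partition, transfers twins back,
and increases the number of cells using `j`, so this terminates with twins.
-/

open Finset

namespace Subcube

variable {n : ℕ}

def IsCell (v : Fin n → ℤ) : Prop := ∀ j, v j = 1 ∨ v j = 0 ∨ v j = -1

def IsVertex (s : Fin n → ℤ) : Prop := ∀ j, s j = 1 ∨ s j = -1

def Covers (v s : Fin n → ℤ) : Prop := ∀ j, v j = 0 ∨ v j = s j

structure IsPartition (V : Finset (Fin n → ℤ)) : Prop where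
  isCell : ∀ v ∈ V, IsCell v
  exists_mul_eq_neg_one : ∀ v ∈ V, ∀ w ∈ V, v ≠ w → ∃ j, v j * w j = -1
  exists_covers : ∀ s, IsVertex s → ∃ v ∈ V, Covers v s

open Classical in
noncomputable def support (V : Finset (Fin n → ℤ)) : Finset (Fin n) :=
  {j | ∃ v ∈ V, v j ≠ 0}

def IsTwin (v w : Fin n → ℤ) (j : Fin n) : Prop :=
  v j * w j = -1 ∧ ∀ k, k ≠ j → v k = w k

def HasTwins (V : Finset (Fin n → ℤ)) : Prop :=
  ∃ v ∈ V, ∃ w ∈ V, ∃ j, IsTwin v w j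

def corner (v : Fin n → ℤ) : Fin n → ℤ := fun j => if v j = 0 then 1 else v j

section Basic

variable {V W : Finset (Fin n → ℤ)} {v w s : Fin n → ℤ} {j : Fin n}

@[simp]
theorem mem_support : j ∈ support V ↔ ∃ v ∈ V, v j ≠ 0 := by
  simp [support]

@[simp]
theorem support_empty : support (∅ : Finset (Fin n → ℤ)) = ∅ := by
  ext; simp

theorem support_union : support (V ∪ W) = support V ∪ support W := by
  ext j
  simp only [mem_support, mem_union]
  constructor
  · rintro ⟨v, hv | hv, hvj⟩
    exacts [Or.inl ⟨v, hv, hvj⟩, Or.inr ⟨v, hv, hvj⟩]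
  · rintro (⟨v, hv, hvj⟩ | ⟨v, hv, hvj⟩)
    exacts [⟨v, Or.inl hv, hvj⟩, ⟨v, Or.inr hv, hvj⟩]

theorem finite_setOf_isCell : {v : Fin n → ℤ | IsCell v}.Finite :=
  (Set.Finite.pi fun _ => Set.toFinite ({1, 0, -1} : Set ℤ)).subset fun v hv j => by
    simpa using hv j

theorem IsTwin.symm (h : IsTwin v w j) : IsTwin w v j :=
  ⟨by rw [mul_comm]; exact h.1, fun k hk => (h.2 k hk).symm⟩

theorem IsCell.isVertex_corner (hv : IsCell v) : IsVertex (corner v) := by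
  intro j
  unfold corner
  split_ifs <;> grind [IsCell]

theorem covers_corner (v : Fin n → ℤ) : Covers v (corner v) := by
  intro j
  unfold corner
  split_ifs <;> simp_all

theorem IsCell.update (hv : IsCell v) {c : ℤ} (hc : c = 1 ∨ c = 0 ∨ c = -1) :
    IsCell (Function.update v j c) := by
  intro k
  rcases eq_or_ne k j with rfl | hk
  · simpa using hc
  · simpa [hk] using hv k

theorem IsVertex.update (hs : IsVertex s) {e : ℤ} (he : e = 1 ∨ e = -1) :
    IsVertex (Function.update s j e) := by
  intro k
  rcases eq_or_ne k j with rfl | hk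
  · simpa using he
  · simpa [hk] using hs k

theorem exists_mul_eq_neg_one_of_not_covers (hv : IsCell v) (hw : IsCell w)
    (h : ∀ s, IsVertex s → Covers v s → ¬Covers w s) : ∃ j, v j * w j = -1 := by
  by_contra! hvw
  refine h (fun j => if v j = 0 then corner w j else v j) ?_ ?_ ?_ <;> intro j <;>
    have := hvw j <;> rw [Ne, Int.mul_eq_neg_one_iff_eq_one_or_neg_one] at this <;>
    have := hv j <;> have := hw j <;> simp only [corner] <;> split_ifs <;> omega

theorem IsPartition.eq_of_covers (hV : IsPartition V) (hv : v ∈ V) (hw : w ∈ V)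
    (hs : IsVertex s) (hvs : Covers v s) (hws : Covers w s) : v = w := by
  by_contra hvw
  obtain ⟨j, hj⟩ := hV.exists_mul_eq_neg_one v hv w hw hvw
  have := Int.mul_eq_neg_one_iff_eq_one_or_neg_one.mp hj
  have := hvs j; have := hws j; have := hs j
  omega

theorem IsPartition.sdiff_union (hV : IsPartition V) {A B : Finset (Fin n → ℤ)}
    (hA : A ⊆ V) (hB : ∀ b ∈ B, IsCell b) (hBB : ∀ b ∈ B, ∀ b' ∈ B, b ≠ b' → ∃ j, b j * b' j = -1)
    (hAB : ∀ s, IsVertex s → ((∃ a ∈ A, Covers a s) ↔ ∃ b ∈ B, Covers b s)) :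
    IsPartition (V \ A ∪ B) where
  isCell u hu := by
    rcases mem_union.mp hu with hu | hu
    exacts [hV.isCell u (mem_sdiff.mp hu).1, hB u hu]
  exists_mul_eq_neg_one := by
    have key : ∀ u ∈ V \ A, ∀ b ∈ B, ∃ j, u j * b j = -1 := by
      intro u hu b hb
      rw [mem_sdiff] at hu
      refine exists_mul_eq_neg_one_of_not_covers (hV.isCell u hu.1) (hB b hb) fun s hs hus hbs => ?_
      obtain ⟨a, ha, has⟩ := (hAB s hs).mpr ⟨b, hb, hbs⟩
      exact hu.2 (hV.eq_of_covers (hA ha) hu.1 hs has hus ▸ ha)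
    intro u hu w hw huw
    rcases mem_union.mp hu with hu | hu <;> rcases mem_union.mp hw with hw | hw
    · exact hV.exists_mul_eq_neg_one u (mem_sdiff.mp hu).1 w (mem_sdiff.mp hw).1 huw
    · exact key u hu w hw
    · obtain ⟨j, hj⟩ := key w hw u hu
      exact ⟨j, by rwa [mul_comm]⟩
    · exact hBB u hu w hw huw
  exists_covers s hs := by
    obtain ⟨v, hv, hvs⟩ := hV.exists_covers s hs
    by_cases hvA : v ∈ A
    · obtain ⟨b, hb, hbs⟩ := (hAB s hs).mp ⟨v, hvA, hvs⟩
      exact ⟨b, mem_union_right _ hb, hbs⟩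
    · exact ⟨v, mem_union_left _ (mem_sdiff.mpr ⟨hv, hvA⟩), hvs⟩

theorem IsPartition.disjoint_sdiff (hV : IsPartition V)
    {A B : Finset (Fin n → ℤ)} (hA : A ⊆ V) (hB : ∀ b ∈ B, IsCell b)
    (hBA : ∀ s, IsVertex s → ∀ b ∈ B, Covers b s → ∃ a ∈ A, Covers a s) :
    Disjoint (V \ A) B := by
  refine disjoint_left.mpr fun b hbV hb => (mem_sdiff.mp hbV).2 ?_
  have hs := (hB b hb).isVertex_corner
  obtain ⟨a, ha, has⟩ := hBA _ hs b hb (covers_corner b)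
  exact hV.eq_of_covers (hA ha) (mem_sdiff.mp hbV).1 hs has (covers_corner b) ▸ ha

end Basic

section Tarsi

variable {V G : Finset (Fin n → ℤ)}

noncomputable def deficiency (G : Finset (Fin n → ℤ)) : ℤ := G.card - (support G).card

theorem IsPartition.eq_of_forall_exists_eq_neg (hV : IsPartition V) (hG : G ⊆ V)
    {s₀ : Fin n → ℤ} (hs₀ : IsVertex s₀) (h : ∀ w ∈ V \ G, ∃ k ∉ support G, w k = -s₀ k) :
    G = V := by
  classical
  refine Subset.antisymm hG fun w hw => ?_
  by_contra hwG
  have hw' := (hV.isCell w hw).isVertex_corner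
  set u : Fin n → ℤ := fun j => if j ∈ support G then corner w j else s₀ j
  have hu : IsVertex u := fun j => by
    simp only [u]
    split_ifs
    exacts [hw' j, hs₀ j]
  obtain ⟨v, hv, hvu⟩ := hV.exists_covers u hu
  have hvG : v ∈ G := by
    by_contra hvG
    obtain ⟨k, hk, hvk⟩ := h v (mem_sdiff.mpr ⟨hv, hvG⟩)
    have := hvu k
    have := hs₀ k
    simp only [u, if_neg hk] at *
    omega
  have hvw : Covers v (corner w) := fun j => by
    by_cases hj : j ∈ support G
    · simpa only [u, if_pos hj] using hvu j
    · exact Or.inl (by_contra fun h => hj (mem_support.mpr ⟨v, hvG, h⟩))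
  exact hwG (hV.eq_of_covers hv hw hw' hvw (covers_corner w) ▸ hvG)

/-- Hall's condition for such a matching is the maximality of the deficiency of `G`. -/
theorem exists_injective_of_deficiency_max (hG : G ⊆ V)
    (hmax : ∀ G' ⊆ V, deficiency G' ≤ deficiency G) :
    ∃ f : {w // w ∈ V \ G} → Fin n, f.Injective ∧ ∀ w, w.1 (f w) ≠ 0 ∧ f w ∉ support G := by
  classical
  let t : {w // w ∈ V \ G} → Finset (Fin n) := fun w =>
    ({k | w.1 k ≠ 0} : Finset (Fin n)) \ support G
  suffices hall : ∀ s : Finset {w // w ∈ V \ G}, s.card ≤ (s.biUnion t).card by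
    obtain ⟨f, hf, hft⟩ := (all_card_le_biUnion_card_iff_exists_injective t).mp hall
    exact ⟨f, hf, fun w => by simpa [t] using hft w⟩
  intro s
  set H := s.map (Function.Embedding.subtype _)
  have hHG : Disjoint G H := disjoint_right.mpr fun w hw => by
    obtain ⟨w, -, rfl⟩ := mem_map.mp hw
    exact (mem_sdiff.mp w.2).2
  have hGH : G ∪ H ⊆ V := union_subset hG fun w hw => by
    obtain ⟨w, -, rfl⟩ := mem_map.mp hw
    exact (mem_sdiff.mp w.2).1
  have hsupp : support H \ support G ⊆ s.biUnion t := fun k hk => by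
    obtain ⟨hkH, hkG⟩ := mem_sdiff.mp hk
    obtain ⟨w, hw, hwk⟩ := mem_support.mp hkH
    obtain ⟨w, hws, rfl⟩ := mem_map.mp hw
    exact mem_biUnion.mpr ⟨w, hws, by simpa [t, hkG] using hwk⟩
  have hcard : ((support G ∪ support H).card : ℤ) ≤
      (support G).card + (support H \ support G).card := by
    rw [← union_sdiff_self_eq_union]
    exact_mod_cast card_union_le _ _
  have := hmax _ hGH
  have := card_le_card hsupp
  simp only [deficiency, support_union, card_union_of_disjoint hHG, card_map, H] at *
  omega

theorem exists_isVertex_of_deficiency_max (hV : ∀ v ∈ V, IsCell v) (hG : G ⊆ V)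
    (hmax : ∀ G' ⊆ V, deficiency G' ≤ deficiency G) :
    ∃ s₀, IsVertex s₀ ∧ ∀ w ∈ V \ G, ∃ k ∉ support G, w k = -s₀ k := by
  obtain ⟨f, hf, hft⟩ := exists_injective_of_deficiency_max hG hmax
  refine ⟨Function.extend f (fun w => -w.1 (f w)) 1, fun j => ?_, fun w hw => ?_⟩
  · by_cases hj : ∃ w, f w = j
    · obtain ⟨w, rfl⟩ := hj
      rw [hf.extend_apply]
      have := hV w.1 (mem_sdiff.mp w.2).1 (f w)
      have := (hft w).1
      omega
    · simp [Function.extend_apply' _ _ _ hj]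
  · refine ⟨f ⟨w, hw⟩, (hft _).2, ?_⟩
    rw [hf.extend_apply]
    ring

theorem IsPartition.eq_of_deficiency_max (hV : IsPartition V) (hG : G ⊆ V)
    (hmax : ∀ G' ⊆ V, deficiency G' ≤ deficiency G) : G = V :=
  let ⟨_, hs₀, h⟩ := exists_isVertex_of_deficiency_max hV.isCell hG hmax
  hV.eq_of_forall_exists_eq_neg hG hs₀ h

theorem IsPartition.deficiency_le (hV : IsPartition V) (hG : G ⊆ V) :
    deficiency G ≤ deficiency V := by
  obtain ⟨G₀, hG₀, hmax⟩ := exists_max_image V.powerset deficiency ⟨∅, empty_mem_powerset V⟩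
  obtain rfl := hV.eq_of_deficiency_max (mem_powerset.mp hG₀) fun G' hG' =>
    hmax G' (mem_powerset.mpr hG')
  exact hmax G (mem_powerset.mpr hG)

/-- Tarsi's lemma. -/
theorem IsPartition.card_support_lt (hV : IsPartition V) : (support V).card < V.card := by
  by_contra! h
  have := hV.eq_of_deficiency_max (empty_subset V) fun G hG =>
    (hV.deficiency_le hG).trans (by simp [deficiency]; omega)
  obtain ⟨v, hv, -⟩ := hV.exists_covers (fun _ => 1) fun _ => Or.inl rfl
  simp [← this] at hv

theorem IsPartition.card_le_card_support_of_ssubset (hV : IsPartition V)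
    (hmin : V.card = (support V).card + 1) (hG : G ⊂ V) : G.card ≤ (support G).card := by
  by_contra! h
  refine hG.ne (hV.eq_of_deficiency_max hG.subset fun G' hG' => (hV.deficiency_le hG').trans ?_)
  simp only [deficiency]
  omega

end Tarsi

section Slice

variable {V : Finset (Fin n → ℤ)} {j : Fin n} {e : ℤ}

/-- The cells meeting the facet `{s | s j = e}` of the cube. -/
def half (V : Finset (Fin n → ℤ)) (j : Fin n) (e : ℤ) : Finset (Fin n → ℤ) :=
  {v ∈ V | v j ≠ -e}

/-- The partition induced by `V` on the facet `{s | s j = e}`, with coordinate `j` forgotten. -/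
def slice (V : Finset (Fin n → ℤ)) (j : Fin n) (e : ℤ) : Finset (Fin n → ℤ) :=
  (half V j e).image (Function.update · j 0)

@[simp]
theorem mem_half {v : Fin n → ℤ} : v ∈ half V j e ↔ v ∈ V ∧ v j ≠ -e := by
  simp [half]

theorem mem_slice {w : Fin n → ℤ} :
    w ∈ slice V j e ↔ ∃ v ∈ half V j e, Function.update v j 0 = w :=
  mem_image

theorem IsPartition.exists_eq_of_mem_support (hV : IsPartition V) (hj : j ∈ support V)
    (he : e = 1 ∨ e = -1) : ∃ v ∈ V, v j = e := by
  obtain ⟨u, hu, huj⟩ := mem_support.mp hj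
  have hu' := (hV.isCell u hu).isVertex_corner
  obtain ⟨w, hw, hws⟩ := hV.exists_covers _ (hu'.update (j := j) he)
  refine ⟨w, hw, ?_⟩
  rcases hws j with hwj | hwj
  · have hwu : Covers w (corner u) := fun k => by
      rcases eq_or_ne k j with rfl | hk
      · exact Or.inl hwj
      · simpa [hk] using hws k
    exact absurd (hV.eq_of_covers hw hu hu' hwu (covers_corner u) ▸ hwj) huj
  · simpa using hwj

theorem IsPartition.exists_ne_mul_eq_neg_one_of_mem_half (hV : IsPartition V)
    (he : e = 1 ∨ e = -1) {v w : Fin n → ℤ} (hv : v ∈ half V j e) (hw : w ∈ half V j e)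
    (hvw : v ≠ w) : ∃ k ≠ j, v k * w k = -1 := by
  rw [mem_half] at hv hw
  obtain ⟨k, hk⟩ := hV.exists_mul_eq_neg_one v hv.1 w hw.1 hvw
  refine ⟨k, ?_, hk⟩
  rintro rfl
  have := Int.mul_eq_neg_one_iff_eq_one_or_neg_one.mp hk
  omega

theorem IsPartition.injOn_half (hV : IsPartition V) (he : e = 1 ∨ e = -1) :
    Set.InjOn (Function.update · j 0) (half V j e : Set (Fin n → ℤ)) := by
  intro v hv w hw hvw
  by_contra hne
  obtain ⟨k, hkj, hk⟩ := hV.exists_ne_mul_eq_neg_one_of_mem_half he hv hw hne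
  have := congrFun hvw k
  simp only [Function.update_of_ne hkj] at this
  rw [this, Int.mul_eq_neg_one_iff_eq_one_or_neg_one] at hk
  omega

theorem IsPartition.card_slice (hV : IsPartition V) (he : e = 1 ∨ e = -1) :
    (slice V j e).card = (half V j e).card :=
  card_image_of_injOn (hV.injOn_half he)

theorem isPartition_slice (hV : IsPartition V) (he : e = 1 ∨ e = -1) :
    IsPartition (slice V j e) where
  isCell w hw := by
    obtain ⟨v, hv, rfl⟩ := mem_slice.mp hw
    intro k
    rcases eq_or_ne k j with rfl | hk
    · simp
    · simpa [hk] using hV.isCell v (mem_half.mp hv).1 k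
  exists_mul_eq_neg_one := by
    simp only [mem_slice]
    rintro _ ⟨v, hv, rfl⟩ _ ⟨w, hw, rfl⟩ hvw
    obtain ⟨k, hkj, hk⟩ := hV.exists_ne_mul_eq_neg_one_of_mem_half he hv hw
      fun h => hvw (h ▸ rfl)
    exact ⟨k, by simpa [hkj] using hk⟩
  exists_covers s hs := by
    obtain ⟨v, hv, hvs⟩ := hV.exists_covers _ (hs.update (j := j) he)
    refine ⟨Function.update v j 0, mem_slice.mpr ⟨v, mem_half.mpr ⟨hv, ?_⟩, rfl⟩, fun k => ?_⟩
    · have := hvs j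
      simp at this
      omega
    · rcases eq_or_ne k j with rfl | hk
      · simp
      · simpa [hk] using hvs k

theorem support_slice : support (slice V j e) = (support (half V j e)).erase j := by
  ext k
  simp only [mem_support, mem_erase, mem_slice]
  constructor
  · rintro ⟨_, ⟨v, hv, rfl⟩, hvk⟩
    have hk : k ≠ j := by rintro rfl; simp at hvk
    exact ⟨hk, v, hv, by simpa [hk] using hvk⟩
  · rintro ⟨hk, v, hv, hvk⟩
    exact ⟨_, ⟨v, hv, rfl⟩, by simpa [hk] using hvk⟩

theorem half_union_half (he : e ≠ 0) : half V j e ∪ half V j (-e) = V := by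
  rw [half, half, ← filter_or, filter_true_of_mem]
  intro v _
  omega

theorem support_slice_union_support_slice (he : e ≠ 0) :
    support (slice V j e) ∪ support (slice V j (-e)) = (support V).erase j := by
  rw [support_slice, support_slice, ← erase_union_distrib, ← support_union, half_union_half he]

/-- Tarsi's lemma for both slices and for the cells `V₀` not using `j` (a proper subfamily) leaves
no slack in `#(half V j e) + #(half V j (-e)) = #V + #V₀`. -/
theorem IsPartition.card_slice_eq (hV : IsPartition V) (hmin : V.card = (support V).card + 1)
    (hj : j ∈ support V) (he : e = 1 ∨ e = -1) :
    (slice V j e).card = (support (slice V j e)).card + 1 := by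
  set V₀ := {v ∈ V | v j = 0}
  have hinter : half V j e ∩ half V j (-e) = V₀ := by
    rw [half, half, ← filter_and]
    refine filter_congr fun v hv => ?_
    have := hV.isCell v hv j
    omega
  have hcard : (half V j e).card + (half V j (-e)).card = V.card + V₀.card := by
    rw [← card_union_add_card_inter, half_union_half (by omega), hinter]
  have hsupp_inter : support V₀ ⊆ support (slice V j e) ∩ support (slice V j (-e)) := by
    intro k hk
    obtain ⟨v, hv, hvk⟩ := mem_support.mp hk
    obtain ⟨hvV, hvj⟩ := mem_filter.mp hv
    have hkj : k ≠ j := by rintro rfl; exact hvk hvj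
    have hv' := mem_inter.mp (hinter ▸ hv)
    simp only [mem_inter, support_slice, mem_erase]
    exact ⟨⟨hkj, mem_support.mpr ⟨v, hv'.1, hvk⟩⟩, hkj, mem_support.mpr ⟨v, hv'.2, hvk⟩⟩
  have hV₀ : V₀ ⊂ V := by
    refine filter_ssubset.mpr ?_
    obtain ⟨v, hv, hvj⟩ := hV.exists_eq_of_mem_support hj he
    exact ⟨v, hv, by omega⟩
  have := hV.card_le_card_support_of_ssubset hmin hV₀
  have := card_le_card hsupp_inter
  have := card_union_add_card_inter (support (slice V j e)) (support (slice V j (-e)))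
  have := (isPartition_slice (j := j) hV he).card_support_lt
  have := (isPartition_slice (j := j) (e := -e) hV (by omega)).card_support_lt
  rw [support_slice_union_support_slice (by omega), card_erase_of_mem hj] at *
  rw [hV.card_slice he] at *
  rw [hV.card_slice (by omega)] at *
  omega

end Slice

section Twins

variable {V : Finset (Fin n → ℤ)} {r t v s : Fin n → ℤ} {l : Fin n}

theorem IsTwin.ne (h : IsTwin r t l) : r ≠ t := by
  rintro rfl
  have := Int.mul_eq_neg_one_iff_eq_one_or_neg_one.mp h.1
  omega

theorem IsTwin.covers_update_iff (h : IsTwin r t l) (hs : IsVertex s) :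
    Covers (Function.update r l 0) s ↔ Covers r s ∨ Covers t s := by
  have hrtl := Int.mul_eq_neg_one_iff_eq_one_or_neg_one.mp h.1
  constructor
  · intro hM
    have hoff : ∀ k, k ≠ l → r k = 0 ∨ r k = s k := fun k hk => by simpa [hk] using hM k
    by_cases hsl : s l = r l
    · exact Or.inl fun k => (eq_or_ne k l).elim (fun hk => Or.inr (hk ▸ hsl.symm)) (hoff k)
    · refine Or.inr fun k => (eq_or_ne k l).elim (fun hk => ?_) fun hk => h.2 k hk ▸ hoff k hk
      have := hs l
      subst hk
      omega
  · rintro (hrs | hts) k <;> rcases eq_or_ne k l with rfl | hk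
    · simp
    · simpa [hk] using hrs k
    · simp
    · simpa [hk, h.2 k hk] using hts k

theorem IsPartition.merge_twins (hV : IsPartition V) (hr : r ∈ V) (ht : t ∈ V)
    (h : IsTwin r t l) :
    IsPartition (V \ {r, t} ∪ {Function.update r l 0}) ∧
      (V \ {r, t} ∪ {Function.update r l 0}).card + 1 = V.card := by
  have hrt : {r, t} ⊆ V := insert_subset hr (singleton_subset_iff.mpr ht)
  have hcov : ∀ s, IsVertex s → ((∃ a ∈ ({r, t} : Finset _), Covers a s) ↔
      ∃ b ∈ ({Function.update r l 0} : Finset _), Covers b s) := by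
    intro s hs
    simp [h.covers_update_iff hs]
  have hM : ∀ b ∈ ({Function.update r l 0} : Finset _), IsCell b := by
    simpa using (hV.isCell r hr).update (j := l) (c := 0) (by simp)
  have hdisj := hV.disjoint_sdiff hrt hM fun s hs b hb hbs => (hcov s hs).mpr ⟨b, hb, hbs⟩
  refine ⟨hV.sdiff_union hrt hM (by simp) hcov, ?_⟩
  have := card_sdiff_add_card_eq_card hrt
  rw [card_pair h.ne] at this
  rw [card_union_of_disjoint hdisj, card_singleton]
  omega

/-- Otherwise merging the twins gives a partition violating Tarsi's lemma. -/
theorem IsPartition.eq_or_eq_of_isTwin (hV : IsPartition V)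
    (hmin : V.card = (support V).card + 1) (hr : r ∈ V) (ht : t ∈ V) (h : IsTwin r t l)
    (hv : v ∈ V) (hvl : v l ≠ 0) : v = r ∨ v = t := by
  by_contra! hvrt
  obtain ⟨hU, hcard⟩ := hV.merge_twins hr ht h
  have hsupp : support V ⊆ support (V \ {r, t} ∪ {Function.update r l 0}) := by
    intro k hk
    obtain ⟨u, hu, huk⟩ := mem_support.mp hk
    simp only [mem_support, mem_union, mem_sdiff, mem_insert, mem_singleton, not_or]
    by_cases hurt : u = r ∨ u = t
    · rcases eq_or_ne k l with rfl | hkl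
      · exact ⟨v, Or.inl ⟨hv, hvrt⟩, hvl⟩
      · refine ⟨_, Or.inr rfl, ?_⟩
        rcases hurt with rfl | rfl
        · simpa [hkl] using huk
        · simpa [hkl, h.2 k hkl] using huk
    · push Not at hurt
      exact ⟨u, Or.inl ⟨hu, hurt⟩, huk⟩
  have := card_le_card hsupp
  have := hU.card_support_lt
  omega

end Twins

section Flip

variable {V : Finset (Fin n → ℤ)} {p q s : Fin n → ℤ} {j l : Fin n}

def degree (V : Finset (Fin n → ℤ)) (j : Fin n) : ℕ := #{v ∈ V | v j ≠ 0}

theorem degree_union {A B : Finset (Fin n → ℤ)} (h : Disjoint A B) :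
    degree (A ∪ B) j = degree A j + degree B j := by
  rw [degree, filter_union, card_union_of_disjoint (disjoint_filter_filter h), degree, degree]

theorem degree_le_card : degree V j ≤ V.card := card_filter_le _ _

/-- `p ∪ q` is L-shaped in the coordinates `j, l`: `q` spans both values of coordinate `j`,
`p` only one, and they take opposite values at `l`. -/
structure IsLPair (p q : Fin n → ℤ) (j l : Fin n) : Prop where
  apply_left : p j = 1 ∨ p j = -1
  apply_right : q j = 0
  ne : l ≠ j
  mul_eq_neg_one : p l * q l = -1
  eq_of_ne : ∀ k, k ≠ j → k ≠ l → p k = q k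

/-- Cut the L-shaped `p ∪ q` along coordinate `j` instead of `l`. -/
def recut (V : Finset (Fin n → ℤ)) (p q : Fin n → ℤ) (j l : Fin n) : Finset (Fin n → ℤ) :=
  V \ {p, q} ∪ {Function.update p l 0, Function.update q j (-p j)}

theorem IsLPair.covers_update_of_covers (h : IsLPair p q j l) (hs : IsVertex s)
    (hpqs : Covers p s ∨ Covers q s) :
    Covers (Function.update p l 0) s ∨ Covers (Function.update q j (-p j)) s := by
  rcases hpqs with hps | hqs
  · refine Or.inl fun k => ?_
    rcases eq_or_ne k l with rfl | hkl
    · simp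
    · simpa [hkl] using hps k
  by_cases hsj : s j = p j
  · refine Or.inl fun k => ?_
    rcases eq_or_ne k l with rfl | hkl
    · simp
    rcases eq_or_ne k j with rfl | hkj
    · simp [hkl, hsj]
    · simpa [hkl, h.eq_of_ne k hkj hkl] using hqs k
  · refine Or.inr fun k => ?_
    rcases eq_or_ne k j with rfl | hkj
    · have := hs k
      have := h.apply_left
      simp
      omega
    · simpa [hkj] using hqs k

theorem IsLPair.covers_of_covers_update (h : IsLPair p q j l) (hs : IsVertex s)
    (hpqs : Covers (Function.update p l 0) s ∨ Covers (Function.update q j (-p j)) s) :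
    Covers p s ∨ Covers q s := by
  rcases hpqs with hps | hqs
  · by_cases hsl : s l = p l
    · refine Or.inl fun k => ?_
      rcases eq_or_ne k l with rfl | hkl
      · exact Or.inr hsl.symm
      · simpa [hkl] using hps k
    · refine Or.inr fun k => ?_
      rcases eq_or_ne k l with rfl | hkl
      · have := hs k
        have := Int.mul_eq_neg_one_iff_eq_one_or_neg_one.mp h.mul_eq_neg_one
        omega
      rcases eq_or_ne k j with rfl | hkj
      · exact Or.inl h.apply_right
      · simpa [hkl, h.eq_of_ne k hkj hkl] using hps k
  · refine Or.inr fun k => ?_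
    rcases eq_or_ne k j with rfl | hkj
    · exact Or.inl h.apply_right
    · simpa [hkj] using hqs k

theorem IsLPair.ne_update (h : IsLPair p q j l) :
    Function.update p l 0 ≠ Function.update q j (-p j) := by
  intro he
  have hj := congrFun he j
  simp only [Function.update_of_ne h.ne.symm, Function.update_self] at hj
  have := h.apply_left
  omega

theorem isPartition_recut (hV : IsPartition V) (hp : p ∈ V) (hq : q ∈ V) (h : IsLPair p q j l) :
    IsPartition (recut V p q j l) ∧ Disjoint (V \ {p, q})
      {Function.update p l 0, Function.update q j (-p j)} := by
  have hA : {p, q} ⊆ V := insert_subset hp (singleton_subset_iff.mpr hq)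
  have hB : ∀ b ∈ ({Function.update p l 0, Function.update q j (-p j)} : Finset _), IsCell b := by
    have := h.apply_left
    simp only [mem_insert, mem_singleton, forall_eq_or_imp, forall_eq]
    exact ⟨(hV.isCell p hp).update (by simp), (hV.isCell q hq).update (by omega)⟩
  have hAB : ∀ s, IsVertex s → ((∃ a ∈ ({p, q} : Finset _), Covers a s) ↔
      ∃ b ∈ ({Function.update p l 0, Function.update q j (-p j)} : Finset _), Covers b s) := by
    intro s hs
    simpa using ⟨h.covers_update_of_covers hs, h.covers_of_covers_update hs⟩
  refine ⟨hV.sdiff_union hA hB ?_ hAB,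
    hV.disjoint_sdiff hA hB fun s hs b hb hbs => (hAB s hs).mpr ⟨b, hb, hbs⟩⟩
  have hj : (Function.update p l 0) j * (Function.update q j (-p j)) j = -1 := by
    have := h.apply_left
    rw [Function.update_of_ne h.ne.symm, Function.update_self]
    rcases this with h1 | h1 <;> rw [h1] <;> norm_num
  intro b hb b' hb' hne
  rw [mem_insert, mem_singleton] at hb hb'
  rcases hb with rfl | rfl <;> rcases hb' with rfl | rfl
  · exact absurd rfl hne
  · exact ⟨j, hj⟩
  · exact ⟨j, by rwa [mul_comm]⟩
  · exact absurd rfl hne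

theorem IsLPair.left_ne_right (h : IsLPair p q j l) : p ≠ q := by
  rintro rfl
  have := h.apply_left
  have := h.apply_right
  omega

theorem card_recut (hV : IsPartition V) (hp : p ∈ V) (hq : q ∈ V) (h : IsLPair p q j l) :
    (recut V p q j l).card = V.card := by
  have := card_sdiff_add_card_eq_card (insert_subset hp (singleton_subset_iff.mpr hq))
  rw [recut, card_union_of_disjoint (isPartition_recut hV hp hq h).2, card_pair h.ne_update]
  rw [card_pair h.left_ne_right] at this
  exact this

theorem support_recut (hp : p ∈ V) (hq : q ∈ V) (h : IsLPair p q j l) :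
    support (recut V p q j l) = support V := by
  have hpj := h.apply_left
  have hql := Int.mul_eq_neg_one_iff_eq_one_or_neg_one.mp h.mul_eq_neg_one
  ext k
  simp only [recut, mem_support, mem_union, mem_sdiff, mem_insert, mem_singleton, not_or]
  constructor
  · rintro ⟨u, ⟨hu, -⟩ | rfl | rfl, huk⟩
    · exact ⟨u, hu, huk⟩
    · rcases eq_or_ne k l with rfl | hkl
      · simp at huk
      · exact ⟨p, hp, by simpa [hkl] using huk⟩
    · rcases eq_or_ne k j with rfl | hkj
      · exact ⟨p, hp, by omega⟩
      · exact ⟨q, hq, by simpa [hkj] using huk⟩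
  · rintro ⟨u, hu, huk⟩
    by_cases hup : u = p
    · subst hup
      rcases eq_or_ne k l with rfl | hkl
      · exact ⟨_, Or.inr (Or.inr rfl), by simp [h.ne]; omega⟩
      · exact ⟨_, Or.inr (Or.inl rfl), by simpa [hkl] using huk⟩
    by_cases huq : u = q
    · subst huq
      have hkj : k ≠ j := by rintro rfl; exact huk h.apply_right
      exact ⟨_, Or.inr (Or.inr rfl), by simpa [hkj] using huk⟩
    · exact ⟨u, Or.inl ⟨hu, hup, huq⟩, huk⟩

theorem degree_recut (hV : IsPartition V) (hp : p ∈ V) (hq : q ∈ V) (h : IsLPair p q j l) :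
    degree (recut V p q j l) j = degree V j + 1 := by
  have hpq : {p, q} ⊆ V := insert_subset hp (singleton_subset_iff.mpr hq)
  have hpj : p j ≠ 0 := by have := h.apply_left; omega
  have hsplit := degree_union (j := j) (sdiff_disjoint (t := V) (s := {p, q}))
  rw [sdiff_union_of_subset hpq] at hsplit
  rw [recut, degree_union (isPartition_recut hV hp hq h).2, hsplit]
  simp [degree, filter_insert, filter_singleton, h.apply_right, Function.update_of_ne h.ne.symm,
    hpj, h.ne_update]

theorem mem_recut {u : Fin n → ℤ} : u ∈ recut V p q j l ↔
    u = Function.update p l 0 ∨ u = Function.update q j (-p j) ∨ u ∈ V ∧ u ≠ p ∧ u ≠ q := by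
  simp [recut]

theorem IsLPair.isTwin_of_isTwin_update (h : IsLPair p q j l) {u : Fin n → ℤ}
    (hu : IsTwin (Function.update q j (-p j)) u l) : IsTwin p u j := by
  have hpj := h.apply_left
  have hpql := Int.mul_eq_neg_one_iff_eq_one_or_neg_one.mp h.mul_eq_neg_one
  have hul := Int.mul_eq_neg_one_iff_eq_one_or_neg_one.mp hu.1
  have huj := hu.2 j h.ne.symm
  simp only [Function.update_self, Function.update_of_ne h.ne] at hul huj
  refine ⟨by rcases hpj with h1 | h1 <;> rw [← huj, h1] <;> norm_num, fun k hkj => ?_⟩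
  rcases eq_or_ne k l with rfl | hkl
  · omega
  · rw [← hu.2 k hkl, Function.update_of_ne hkj, h.eq_of_ne k hkj hkl]

theorem IsLPair.eq_of_update_apply (h : IsLPair p q j l) {l' : Fin n}
    (hp : Function.update p l 0 l' = 0) (hq : Function.update q j (-p j) l' ≠ 0) : l' = l := by
  by_contra hl'l
  have := h.apply_left
  rcases eq_or_ne l' j with rfl | hl'j
  · simp [Function.update_of_ne h.ne.symm] at hp
    omega
  · simp only [Function.update_of_ne hl'l, Function.update_of_ne hl'j] at hp hq
    exact hq (h.eq_of_ne l' hl'j hl'l ▸ hp)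

theorem IsLPair.exists_update_apply_ne (h : IsLPair p q j l) {l' : Fin n}
    (hp : Function.update p l 0 l' ≠ 0) : Function.update q j (-p j) l' ≠ 0 ∧
      ∃ k, k ≠ l' ∧ Function.update p l 0 k ≠ Function.update q j (-p j) k := by
  have hpj := h.apply_left
  have hpql := Int.mul_eq_neg_one_iff_eq_one_or_neg_one.mp h.mul_eq_neg_one
  have hl'l : l' ≠ l := by rintro rfl; simp at hp
  rcases eq_or_ne l' j with rfl | hl'j
  · exact ⟨by simp; omega, l, h.ne, by simp [h.ne]; omega⟩
  · simp only [Function.update_of_ne hl'l, Function.update_of_ne hl'j] at hp ⊢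
    exact ⟨h.eq_of_ne l' hl'j hl'l ▸ hp, j, hl'j.symm, by simp [h.ne.symm]; omega⟩

/-- Distinct cells using `l'` form the twin pair at `l'` (minimality), so a twin pair through a
new cell is either the new pair, which differs in two coordinates, or `q'` with an old twin `u`
at `l`, and then `p, u` are twins at `j`. -/
theorem hasTwins_of_hasTwins_recut (hV : IsPartition V) (hmin : V.card = (support V).card + 1)
    (hp : p ∈ V) (hq : q ∈ V) (h : IsLPair p q j l) (htw : HasTwins (recut V p q j l)) :
    HasTwins V := by
  obtain ⟨r, hr, t, ht, l', hrt⟩ := htw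
  have hmin' : (recut V p q j l).card = (support (recut V p q j l)).card + 1 := by
    rw [card_recut hV hp hq h, support_recut hp hq h, hmin]
  have hrt' : ∀ u ∈ recut V p q j l, u l' ≠ 0 → u = r ∨ u = t := fun u hu =>
    (isPartition_recut hV hp hq h).1.eq_or_eq_of_isTwin hmin' hr ht hrt hu
  set p' := Function.update p l 0
  set q' := Function.update q j (-p j)
  have hp' : p' ∈ recut V p q j l := mem_recut.mpr (Or.inl rfl)
  have hq' : q' ∈ recut V p q j l := mem_recut.mpr (Or.inr (Or.inl rfl))
  by_cases hp'l' : p' l' = 0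
  swap
  · exfalso
    obtain ⟨hq'l', k, hk, hne⟩ := h.exists_update_apply_ne hp'l'
    rcases hrt' p' hp' hp'l' with rfl | rfl <;> rcases hrt' q' hq' hq'l' with h' | h'
    · exact absurd h'.symm h.ne_update
    · exact hne (by show p' k = q' k; rw [h']; exact hrt.2 k hk)
    · exact hne (by show p' k = q' k; rw [h']; exact (hrt.2 k hk).symm)
    · exact absurd h'.symm h.ne_update
  have hrl' := Int.mul_eq_neg_one_iff_eq_one_or_neg_one.mp hrt.1
  by_cases hq'l' : q' l' = 0
  · have hold : ∀ u ∈ recut V p q j l, u l' ≠ 0 → u ∈ V := fun u hu hul => by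
      rcases mem_recut.mp hu with rfl | rfl | hu
      exacts [absurd hp'l' hul, absurd hq'l' hul, hu.1]
    exact ⟨r, hold r hr (by omega), t, hold t ht (by omega), l', hrt⟩
  obtain rfl := h.eq_of_update_apply hp'l' hq'l'
  obtain ⟨u, hu, hq'u⟩ : ∃ u ∈ recut V p q j l', IsTwin q' u l' := by
    rcases hrt' q' hq' hq'l' with rfl | rfl
    exacts [⟨t, ht, hrt⟩, ⟨r, hr, hrt.symm⟩]
  have hul := Int.mul_eq_neg_one_iff_eq_one_or_neg_one.mp hq'u.1
  rcases mem_recut.mp hu with hu | hu | hu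
  · simp [hu] at hul
  · exact absurd hu.symm hq'u.ne
  · exact ⟨p, hp, u, hu.1, j, h.isTwin_of_isTwin_update hq'u⟩

end Flip

section Main

variable {V : Finset (Fin n → ℤ)} {j : Fin n} {e : ℤ}

theorem IsPartition.hasTwins_or_isLPair_of_hasTwins_slice (hV : IsPartition V)
    (he : e = 1 ∨ e = -1) (htw : HasTwins (slice V j e)) :
    HasTwins V ∨ ∃ p ∈ V, ∃ q ∈ V, ∃ l, IsLPair p q j l := by
  obtain ⟨_, hp', _, hq', l, hl, hoff⟩ := htw
  obtain ⟨p, hp, rfl⟩ := mem_slice.mp hp'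
  obtain ⟨q, hq, rfl⟩ := mem_slice.mp hq'
  rw [mem_half] at hp hq
  have hlj : l ≠ j := by rintro rfl; simp at hl
  simp only [Function.update_of_ne hlj] at hl
  have hoff' : ∀ k, k ≠ j → k ≠ l → p k = q k := fun k hkj hkl => by
    simpa [hkj] using hoff k hkl
  have := hV.isCell p hp.1 j
  have := hV.isCell q hq.1 j
  by_cases hpq : p j = q j
  · refine Or.inl ⟨p, hp.1, q, hq.1, l, hl, fun k hkl => ?_⟩
    rcases eq_or_ne k j with rfl | hkj
    exacts [hpq, hoff' k hkj hkl]
  · right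
    by_cases hpj : p j = 0
    · exact ⟨q, hq.1, p, hp.1, l, ⟨by omega, hpj, hlj, by rwa [mul_comm],
        fun k hkj hkl => (hoff' k hkj hkl).symm⟩⟩
    · exact ⟨p, hp.1, q, hq.1, l, ⟨by omega, by omega, hlj, hl, hoff'⟩⟩

theorem IsPartition.hasTwins_or_isLPair (hV : IsPartition V)
    (hmin : V.card = (support V).card + 1) (hj : j ∈ support V) (h2 : 1 < (support V).card)
    (IH : ∀ W : Finset (Fin n → ℤ), IsPartition W → W.card = (support W).card + 1 →
      (support W).Nonempty → W.card < V.card → HasTwins W) :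
    HasTwins V ∨ ∃ p ∈ V, ∃ q ∈ V, ∃ l, IsLPair p q j l := by
  obtain ⟨e, he, hne⟩ : ∃ e : ℤ, (e = 1 ∨ e = -1) ∧ (support (slice V j e)).Nonempty := by
    have hpos : ((support V).erase j).Nonempty := by
      rw [← card_pos, card_erase_of_mem hj]
      omega
    rw [← support_slice_union_support_slice one_ne_zero] at hpos
    rcases union_nonempty.mp hpos with h | h
    exacts [⟨1, Or.inl rfl, h⟩, ⟨-1, Or.inr rfl, h⟩]
  have hlt : (slice V j e).card < V.card := by
    rw [hV.card_slice he]
    obtain ⟨v, hv, hvj⟩ := hV.exists_eq_of_mem_support hj (e := -e) (by omega)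
    exact card_lt_card (filter_ssubset.mpr ⟨v, hv, by simp [hvj]⟩)
  exact hV.hasTwins_or_isLPair_of_hasTwins_slice he
    (IH _ (isPartition_slice hV he) (hV.card_slice_eq hmin hj he) hne hlt)

theorem IsPartition.hasTwins_of_support_eq_singleton (hV : IsPartition V)
    (h : support V = {j}) : HasTwins V := by
  have hj : j ∈ support V := h ▸ mem_singleton_self j
  obtain ⟨v, hv, hvj⟩ := hV.exists_eq_of_mem_support hj (Or.inl rfl)
  obtain ⟨w, hw, hwj⟩ := hV.exists_eq_of_mem_support hj (Or.inr rfl)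
  have hzero : ∀ u ∈ V, ∀ k, k ≠ j → u k = 0 := fun u hu k hk => by
    by_contra huk
    exact hk (mem_singleton.mp (h ▸ mem_support.mpr ⟨u, hu, huk⟩))
  exact ⟨v, hv, w, hw, j, by rw [hvj, hwj]; norm_num,
    fun k hk => (hzero v hv k hk).trans (hzero w hw k hk).symm⟩

/-- Recutting an L-pair raises the degree of `j` and keeps everything else, so the induction
on `V.card - degree V j` ends with twins. -/
theorem IsPartition.hasTwins_of_forall_card_lt (hV : IsPartition V)
    (hmin : V.card = (support V).card + 1) (hj : j ∈ support V) (h2 : 1 < (support V).card)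
    (IH : ∀ W : Finset (Fin n → ℤ), IsPartition W → W.card = (support W).card + 1 →
      (support W).Nonempty → W.card < V.card → HasTwins W) :
    HasTwins V := by
  induction hd : V.card - degree V j using Nat.strong_induction_on generalizing V with
  | _ d IHd =>
  rcases hV.hasTwins_or_isLPair hmin hj h2 IH with htw | ⟨p, hp, q, hq, l, hpq⟩
  · exact htw
  have hcard := card_recut hV hp hq hpq
  have hsupp := support_recut hp hq hpq
  refine hasTwins_of_hasTwins_recut hV hmin hp hq hpq (IHd _ ?_ (isPartition_recut hV hp hq hpq).1
    (by rw [hcard, hsupp, hmin]) (hsupp ▸ hj) (hsupp ▸ h2) (hcard ▸ IH) rfl)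
  have := degree_le_card (V := recut V p q j l) (j := j)
  rw [hcard, degree_recut hV hp hq hpq] at this ⊢
  omega

theorem IsPartition.hasTwins (hV : IsPartition V) (hmin : V.card = (support V).card + 1)
    (hne : (support V).Nonempty) : HasTwins V := by
  induction hN : V.card using Nat.strong_induction_on generalizing V with
  | _ N IH =>
  obtain ⟨j, hj⟩ := hne
  rcases eq_or_ne (support V).card 1 with h1 | h1
  · obtain ⟨j', hj'⟩ := card_eq_one.mp h1
    exact hV.hasTwins_of_support_eq_singleton hj'
  refine hV.hasTwins_of_forall_card_lt hmin hj ?_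
    fun W hW hWmin hWne hWN => IH _ (hN ▸ hWN) hW hWmin hWne rfl
  have := card_pos.mpr ⟨j, hj⟩
  omega

end Main

end Subcube

section Geometry

open Subcube Set

variable {n : ℕ} {a b x : Fin n → ℝ} {v w : Fin n → ℤ} {P : Set (Set (Fin n → ℝ))}

theorem mem_interior_Icc_iff {ι : Type*} [Finite ι] {a b y : ι → ℝ} :
    y ∈ interior (Icc a b) ↔ ∀ i, a i < y i ∧ y i < b i := by
  rw [← pi_univ_Icc, interior_pi_set finite_univ]
  simp [interior_Icc]

def cellLower (a x : Fin n → ℝ) (v : Fin n → ℤ) : Fin n → ℝ :=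
  fun j => if v j = 1 then x j else a j

def cellUpper (b x : Fin n → ℝ) (v : Fin n → ℤ) : Fin n → ℝ :=
  fun j => if v j = -1 then x j else b j

/-- The box in `Icc a b` with a vertex at `x` whose boundary incidence sequence at `x` is `v`. -/
def cellBox (a b x : Fin n → ℝ) (v : Fin n → ℤ) : Set (Fin n → ℝ) :=
  Icc (cellLower a x v) (cellUpper b x v)

theorem cellLower_eq_iff (hx : ∀ i, a i < x i ∧ x i < b i) {j : Fin n} :
    cellLower a x v j = x j ↔ v j = 1 := by
  by_cases h : v j = 1 <;> simp [cellLower, h, (hx j).1.ne]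

theorem cellUpper_eq_iff (hx : ∀ i, a i < x i ∧ x i < b i) {j : Fin n} :
    cellUpper b x v j = x j ↔ v j = -1 := by
  by_cases h : v j = -1 <;> simp [cellUpper, h, (hx j).2.ne']

theorem cellLower_lt_cellUpper (hx : ∀ i, a i < x i ∧ x i < b i) (hv : IsCell v) (j : Fin n) :
    cellLower a x v j < cellUpper b x v j := by
  have := hx j
  rcases hv j with h | h | h <;> simp [cellLower, cellUpper, h] <;> linarith

theorem mem_cellBox_self (hx : ∀ i, a i < x i ∧ x i < b i) : x ∈ cellBox a b x v := by
  constructor <;> intro j <;> have := hx j <;> simp only [cellLower, cellUpper] <;> split_ifs <;>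
    linarith

theorem isBIS_cellBox (hx : ∀ i, a i < x i ∧ x i < b i) (hv : IsCell v) :
    IsBIS (cellBox a b x v) x v := by
  refine ⟨_, _, cellLower_lt_cellUpper hx hv, rfl, mem_cellBox_self hx, fun j => ?_⟩
  simp only [eq_comm (a := x j), cellLower_eq_iff hx, cellUpper_eq_iff hx]
  have := hv j
  split_ifs <;> omega

theorem cellBox_injective (hx : ∀ i, a i < x i ∧ x i < b i) (hv : IsCell v) (hw : IsCell w)
    (h : cellBox a b x v = cellBox a b x w) : v = w := by
  obtain ⟨hl, hu⟩ := (Icc_eq_Icc_iff fun j => (cellLower_lt_cellUpper hx hv j).le).mp h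
  funext j
  have h1 : v j = 1 ↔ w j = 1 := by rw [← cellLower_eq_iff hx, ← cellLower_eq_iff hx, hl]
  have h2 : v j = -1 ↔ w j = -1 := by rw [← cellUpper_eq_iff hx, ← cellUpper_eq_iff hx, hu]
  have := hv j
  have := hw j
  omega

theorem eq_of_facet_subset_isFaceOf {a b aQ bQ : Fin n → ℝ} (hab : ∀ i, a i < b i)
    (haQ : ∀ i, aQ i < bQ i) {j : Fin n} {c : ℝ} (hc : c = aQ j ∨ c = bQ j)
    {G : Set (Fin n → ℝ)} (hG : IsFaceOf G (Icc a b)) (hFG : {y ∈ Icc aQ bQ | y j = c} ⊆ G) :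
    c = a j ∨ c = b j := by
  obtain ⟨k, a', b', -, hR, hGk⟩ := hG
  obtain ⟨rfl, rfl⟩ := (Icc_eq_Icc_iff fun i => (hab i).le).mp hR
  obtain ⟨d, hd, hGd⟩ : ∃ d, (d = a k ∨ d = b k) ∧ ∀ y ∈ G, y k = d := by
    rcases hGk with rfl | rfl
    exacts [⟨_, Or.inl rfl, fun y hy => hy.2⟩, ⟨_, Or.inr rfl, fun y hy => hy.2⟩]
  let y : ℝ → Fin n → ℝ := fun t i => if i = j then c else if i = k then t else aQ i
  have hy : ∀ t ∈ Icc (aQ k) (bQ k), y t k = d := fun t ht => by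
    refine hGd _ (hFG ⟨⟨fun i => ?_, fun i => ?_⟩, by simp [y]⟩) <;>
      have := haQ i <;> rcases hc with rfl | rfl <;> simp only [y] <;> split_ifs <;> subst_vars <;>
      first | exact ht.1 | exact ht.2 | linarith
  rcases eq_or_ne k j with rfl | hkj
  · have := hy (aQ k) ⟨le_rfl, (haQ k).le⟩
    simp only [y, if_true] at this
    rwa [this]
  · have h1 := hy (aQ k) ⟨le_rfl, (haQ k).le⟩
    have h2 := hy (bQ k) ⟨(haQ k).le, le_rfl⟩
    simp only [y, if_neg hkj, if_true] at h1 h2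
    exact absurd (h1.trans h2.symm) (haQ k).ne

theorem IsAbout.bounds (habout : IsAbout (Icc a b) P x) (hx : ∀ i, a i < x i ∧ x i < b i)
    {aQ bQ : Fin n → ℝ} (haQ : ∀ i, aQ i < bQ i) (hQ : Icc aQ bQ ∈ P) (hxQ : x ∈ Icc aQ bQ)
    (j : Fin n) :
    (aQ j = x j ∨ aQ j = a j) ∧ (bQ j = x j ∨ bQ j = b j) := by
  have key : ∀ c, c = aQ j ∨ c = bQ j → c = x j ∨ c = a j ∨ c = b j := fun c hc => by
    have hF : IsFaceOf {y ∈ Icc aQ bQ | y j = c} (Icc aQ bQ) :=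
      ⟨j, aQ, bQ, haQ, rfl, by rcases hc with rfl | rfl; exacts [Or.inl rfl, Or.inr rfl]⟩
    rcases habout _ hQ _ hF with hxF | ⟨G, hG, hFG⟩
    · exact Or.inl hxF.2.symm
    · exact Or.inr (eq_of_facet_subset_isFaceOf (fun i => (hx i).1.trans (hx i).2) haQ hc hG hFG)
  have := hx j
  have := hxQ.1 j
  have := hxQ.2 j
  constructor
  · rcases key _ (Or.inl rfl) with h | h | h
    exacts [Or.inl h, Or.inr h, by linarith]
  · rcases key _ (Or.inr rfl) with h | h | h
    exacts [Or.inl h, by linarith, Or.inr h]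

theorem IsAbout.exists_eq_cellBox (habout : IsAbout (Icc a b) P x)
    (hx : ∀ i, a i < x i ∧ x i < b i) {Q : Set (Fin n → ℝ)} (hQP : Q ∈ P)
    (hQ : IsRect Q) (hxQ : x ∈ Q) : ∃ v, IsCell v ∧ Q = cellBox a b x v := by
  obtain ⟨aQ, bQ, haQ, rfl⟩ := hQ
  have hbd := habout.bounds hx haQ hQP hxQ
  set v : Fin n → ℤ := fun j => if x j = aQ j then 1 else if x j = bQ j then -1 else 0
  have hv1 : ∀ j, v j = 1 ↔ x j = aQ j := fun j => by
    simp only [v]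
    split_ifs <;> simp_all
  have hv2 : ∀ j, v j = -1 ↔ x j = bQ j := fun j => by
    have := (haQ j).ne
    simp only [v]
    split_ifs <;> simp_all
  refine ⟨v, fun j => by simp only [v]; split_ifs <;> simp, ?_⟩
  congr 1 <;> funext j
  · by_cases h : x j = aQ j
    · simp [cellLower, (hv1 j).mpr h, h]
    · simp only [cellLower, mt (hv1 j).mp h, if_false]
      exact (hbd j).1.resolve_left (Ne.symm h)
  · by_cases h : x j = bQ j
    · simp [cellUpper, (hv2 j).mpr h, h]
    · simp only [cellUpper, mt (hv2 j).mp h, if_false]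
      exact (hbd j).2.resolve_left (Ne.symm h)

theorem exists_mul_eq_neg_one_of_interior_inter_eq_empty (hx : ∀ i, a i < x i ∧ x i < b i)
    (hv : IsCell v) (hw : IsCell w)
    (h : interior (cellBox a b x v) ∩ interior (cellBox a b x w) = ∅) : ∃ j, v j * w j = -1 := by
  by_contra! hvw
  let y : Fin n → ℝ := fun j => if v j = 1 ∨ w j = 1 then (x j + b j) / 2
    else if v j = -1 ∨ w j = -1 then (a j + x j) / 2 else x j
  have hy : ∀ u, u = v ∨ u = w → y ∈ interior (cellBox a b x u) := by
    rintro u hu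
    rw [cellBox, mem_interior_Icc_iff]
    intro j
    have := hx j
    have := hvw j
    rw [Ne, Int.mul_eq_neg_one_iff_eq_one_or_neg_one] at this
    rcases hv j with h1 | h1 | h1 <;> rcases hw j with h2 | h2 | h2 <;> rcases hu with rfl | rfl <;>
      simp [y, cellLower, cellUpper, h1, h2] at * <;> constructor <;> linarith
  simpa [h] using mem_inter (hy v (Or.inl rfl)) (hy w (Or.inr rfl))

theorem eventually_exists_mem_and_mem {X : Type*} [TopologicalSpace X] {P : Set (Set X)}
    (hP : P.Finite) (hclosed : ∀ Q ∈ P, IsClosed Q) {x : X} (hx : ⋃₀ P ∈ nhds x) :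
    ∀ᶠ y in nhds x, ∃ Q ∈ P, x ∈ Q ∧ y ∈ Q := by
  have hfar : (⋃ Q ∈ {Q ∈ P | x ∉ Q}, Q)ᶜ ∈ nhds x :=
    ((hP.subset fun Q hQ => hQ.1).isClosed_biUnion fun Q hQ => hclosed Q hQ.1).compl_mem_nhds
      (by simp)
  filter_upwards [hx, hfar] with y ⟨Q, hQ, hyQ⟩ hy
  exact ⟨Q, hQ, by_contra fun hxQ => hy (mem_biUnion ⟨hQ, hxQ⟩ hyQ), hyQ⟩

theorem IsLocRegCover.exists_add_smul_mem (hP : IsLocRegCover (Icc a b) P)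
    (hx : x ∈ interior (Icc a b)) (d : Fin n → ℝ) :
    ∃ Q ∈ P, x ∈ Q ∧ ∃ t : ℝ, 0 < t ∧ x + t • d ∈ Q := by
  obtain ⟨hPfin, hrect, hunion⟩ := hP
  have hclosed : ∀ Q ∈ P, IsClosed Q := fun Q hQ => by
    obtain ⟨_, _, -, rfl⟩ := hrect Q hQ
    exact isClosed_Icc
  have hnear :=
    eventually_exists_mem_and_mem hPfin hclosed (hunion ▸ mem_interior_iff_mem_nhds.mp hx)
  have hline : Filter.Tendsto (fun t : ℝ => x + t • d) (nhds 0) (nhds x) := by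
    have hcont : Continuous fun t : ℝ => x + t • d := by fun_prop
    simpa using hcont.tendsto 0
  obtain ⟨t, ⟨Q, hQ, hxQ, htQ⟩, ht⟩ :=
    ((hline.eventually hnear).filter_mono nhdsWithin_le_nhds |>.and
      (self_mem_nhdsWithin (s := Ioi (0 : ℝ)))).exists
  exact ⟨Q, hQ, hxQ, t, ht, htQ⟩

theorem covers_of_add_smul_mem_cellBox (hv : IsCell v) {s : Fin n → ℤ} (hs : IsVertex s) {t : ℝ}
    (ht : 0 < t) (h : x + t • (fun j => (s j : ℝ)) ∈ cellBox a b x v) : Covers v s := by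
  intro j
  have h1 := h.1 j
  have h2 := h.2 j
  rcases hv j with hvj | hvj | hvj <;> rcases hs j with hsj | hsj <;>
    simp [cellLower, cellUpper, hvj, hsj] at h1 h2 ⊢ <;> linarith

noncomputable def cellsAt (a b x : Fin n → ℝ) (P : Set (Set (Fin n → ℝ))) :
    Finset (Fin n → ℤ) :=
  (finite_setOf_isCell.subset (t := {v | IsCell v ∧ cellBox a b x v ∈ P}) fun _ hv => hv.1).toFinset

@[simp]
theorem mem_cellsAt : v ∈ cellsAt a b x P ↔ IsCell v ∧ cellBox a b x v ∈ P := by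
  simp [cellsAt]

theorem isPartition_cellsAt (hx : x ∈ interior (Icc a b)) (hpart : IsLocRegPartition (Icc a b) P)
    (habout : IsAbout (Icc a b) P x) : IsPartition (cellsAt a b x P) where
  isCell v hv := (mem_cellsAt.mp hv).1
  exists_mul_eq_neg_one v hv w hw hvw := by
    rw [mem_cellsAt] at hv hw
    have hx' := mem_interior_Icc_iff.mp hx
    exact exists_mul_eq_neg_one_of_interior_inter_eq_empty hx' hv.1 hw.1
      (hpart.2 _ hv.2 _ hw.2 fun h => hvw (cellBox_injective hx' hv.1 hw.1 h))
  exists_covers s hs := by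
    have hx' := mem_interior_Icc_iff.mp hx
    obtain ⟨Q, hQ, hxQ, t, ht, htQ⟩ := hpart.1.exists_add_smul_mem hx fun j => (s j : ℝ)
    obtain ⟨v, hv, rfl⟩ := habout.exists_eq_cellBox hx' hQ (hpart.1.2.1 Q hQ) hxQ
    exact ⟨v, mem_cellsAt.mpr ⟨hv, hQ⟩, covers_of_add_smul_mem_cellBox hv hs ht htQ⟩

theorem nuP_eq_card_cellsAt (hx : x ∈ interior (Icc a b)) (hrect : ∀ Q ∈ P, IsRect Q)
    (habout : IsAbout (Icc a b) P x) : nuP P x = (cellsAt a b x P).card := by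
  have hx' := mem_interior_Icc_iff.mp hx
  have himage : {Q | Q ∈ P ∧ x ∈ Q} = cellBox a b x '' ↑(cellsAt a b x P) := by
    ext Q
    simp only [mem_ofPred_eq, mem_image, Finset.mem_coe, mem_cellsAt]
    constructor
    · rintro ⟨hQ, hxQ⟩
      obtain ⟨v, hv, rfl⟩ := habout.exists_eq_cellBox hx' hQ (hrect Q hQ) hxQ
      exact ⟨v, ⟨hv, hQ⟩, rfl⟩
    · rintro ⟨v, ⟨-, hv⟩, rfl⟩
      exact ⟨hv, mem_cellBox_self hx'⟩
  rw [nuP, himage, InjOn.ncard_image, ncard_coe_finset]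
  intro v hv w hw
  exact cellBox_injective hx' (mem_cellsAt.mp hv).1 (mem_cellsAt.mp hw).1

theorem betaP_eq_card_support_cellsAt (hx : x ∈ interior (Icc a b))
    (habout : IsAbout (Icc a b) P x) :
    betaP P x = (support (cellsAt a b x P)).card := by
  have hx' := mem_interior_Icc_iff.mp hx
  rw [betaP, ← ncard_coe_finset]
  congr 1
  ext j
  simp only [IsBoundaryVector, mem_ofPred_eq, Finset.mem_coe, mem_support, mem_cellsAt]
  constructor
  · rintro ⟨Q, hQ, F, ⟨a', b', hab', rfl, hF⟩, hxF⟩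
    have hxQ : x ∈ Icc a' b' := by rcases hF with rfl | rfl <;> exact hxF.1
    obtain ⟨v, hv, hQv⟩ := habout.exists_eq_cellBox hx' hQ ⟨a', b', hab', rfl⟩ hxQ
    obtain ⟨rfl, rfl⟩ := (Icc_eq_Icc_iff fun i => (hab' i).le).mp hQv
    refine ⟨v, ⟨hv, hQv ▸ hQ⟩, fun hvj => ?_⟩
    rcases hF with rfl | rfl
    · exact absurd ((cellLower_eq_iff hx').mp hxF.2.symm) (by omega)
    · exact absurd ((cellUpper_eq_iff hx').mp hxF.2.symm) (by omega)
  · rintro ⟨v, ⟨hv, hQ⟩, hvj⟩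
    refine ⟨_, hQ, ?_⟩
    rcases hv j with h | h | h
    · exact ⟨_, ⟨_, _, cellLower_lt_cellUpper hx' hv, rfl, Or.inl rfl⟩,
        mem_cellBox_self hx', ((cellLower_eq_iff hx').mpr h).symm⟩
    · exact absurd h hvj
    · exact ⟨_, ⟨_, _, cellLower_lt_cellUpper hx' hv, rfl, Or.inr rfl⟩,
        mem_cellBox_self hx', ((cellUpper_eq_iff hx').mpr h).symm⟩

end Geometry

/-- a minimal locally regulated partition of `R` about `x` with `β_P(x) ≥ 1`
contains an `e_j`-pair for some `j`. -/
theorem stmt6 (n : ℕ) (R : Set (Fin n → ℝ)) (x : Fin n → ℝ) (P : Set (Set (Fin n → ℝ)))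
    (hR : IsRect R) (hx : x ∈ interior R)
    (hpart : IsLocRegPartition R P) (hab : IsAbout R P x)
    (hmin : nuP P x = betaP P x + 1) (hbeta : 1 ≤ betaP P x) :
    ∃ j : Fin n, ∃ Q₁ ∈ P, ∃ Q₂ ∈ P, Q₁ ≠ Q₂ ∧
      ∃ v₁ v₂ : Fin n → ℤ, IsBIS Q₁ x v₁ ∧ IsBIS Q₂ x v₂ ∧
        (∀ j' : Fin n, j' ≠ j → v₁ j' = v₂ j') ∧ v₁ j * v₂ j = -1 := by
  obtain ⟨a, b, -, rfl⟩ := hR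
  have hx' := mem_interior_Icc_iff.mp hx
  rw [nuP_eq_card_cellsAt hx hpart.1.2.1 hab] at hmin
  rw [betaP_eq_card_support_cellsAt hx hab] at hmin hbeta
  obtain ⟨v₁, h₁, v₂, h₂, j, hv⟩ :=
    (isPartition_cellsAt hx hpart hab).hasTwins hmin (Finset.card_pos.mp hbeta)
  rw [mem_cellsAt] at h₁ h₂
  exact ⟨j, _, h₁.2, _, h₂.2, fun h => hv.ne (cellBox_injective hx' h₁.1 h₂.1 h), v₁, v₂,
    isBIS_cellBox hx' h₁.1, isBIS_cellBox hx' h₂.1, hv.2, hv.1⟩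
end

section
/- Let 𝒫 be a regulated partition of ℝⁿ. Then 𝒫 is minimal (i.e., (n+1)-regulated) if and only if ν_𝒫(x) = β_𝒫(x) + 1 for every x ∈ ℝⁿ. -/
/-!
At a point `x`, every member `Q ∋ x` has a sign vector: `+1` / `-1` in the coordinates where `x`
lies on the bottom / top face of `Q`, `0` elsewhere. Read as subcubes of the cube `{±1}ⁿ` of
directions leaving `x`, these sign vectors partition it: a point slightly inside the orthant of a
direction `s` lies in some member, which by the grid condition contains `x` and has a sign vector
compatible with `s`, and two such members would have overlapping interiors. If the parts fix `k`
directions in total, then on the parts fixing one of them the constant function and those `k`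
coordinate functions are orthogonal for the weights `|part|`, so there are at least `k + 1` parts.
Hence `ν ≥ β + 1` everywhere, and `ν = β + 1` forces `ν ≤ n + 1`.

Conversely, if `ν(x) ≥ β(x) + 2` and some coordinate `j` is not a boundary direction at `x`, slide
`x` in direction `e j` until it first meets a top face. The members appearing there all start at
that height and partition the upper half-cube of directions, so the new boundary directions are
paid for by new members: `β` grows while `ν - β` does not drop. After at most `n` slides `β = n`,
and then `ν ≥ n + 2`.
-/

open Finset Function Filter Topology

lemma card_le_card_of_orthogonal {α κ : Type*} [Fintype κ] (B : Finset α) (w : α → ℝ)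
    (u : κ → α → ℝ) (hw : ∀ a ∈ B, 0 < w a) (hu : ∀ k, ∃ a ∈ B, u k a ≠ 0)
    (horth : Pairwise fun k k' => ∑ a ∈ B, w a * u k a * u k' a = 0) :
    Fintype.card κ ≤ #B := by
  let c (k : κ) : EuclideanSpace ℝ B := WithLp.toLp 2 fun a => √(w a) * u k a
  have hc : LinearIndependent ℝ c := by
    refine linearIndependent_of_ne_zero_of_inner_eq_zero (fun k hk => ?_) fun k k' hkk' => ?_
    · obtain ⟨a, ha, hka⟩ := hu k
      have := congrArg (· ⟨a, ha⟩) hk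
      simp [c, hka, Real.sqrt_eq_zero', not_le.2 (hw a ha)] at this
    · simp only [c, PiLp.inner_apply, RCLike.inner_apply, conj_trivial]
      rw [← horth hkk'.symm, ← sum_coe_sort B]
      refine Fintype.sum_congr _ _ fun a => ?_
      have := Real.mul_self_sqrt (hw a a.2).le
      linear_combination (u k a * u k' a) * this
  simpa using hc.fintype_card_le_finrank

section SubcubePartition

variable {ι α : Type*}

def vertexSign (s : ι → Bool) (i : ι) : SignType := if s i then 1 else -1

lemma vertexSign_ne_zero (s : ι → Bool) (i : ι) : vertexSign s i ≠ 0 := by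
  unfold vertexSign; split <;> decide

variable [DecidableEq ι]

lemma vertexSign_update_not_self (s : ι → Bool) (l : ι) :
    vertexSign (update s l (!s l)) l = -vertexSign s l := by
  cases h : s l <;> simp [vertexSign, h]

lemma vertexSign_update_of_ne {s : ι → Bool} {i l : ι} (h : i ≠ l) (b : Bool) :
    vertexSign (update s l b) i = vertexSign s i := by
  simp [vertexSign, update_of_ne h]

variable [Fintype ι]

def subcube (v : ι → SignType) : Finset (ι → Bool) :=
  {s | ∀ i, v i = 0 ∨ v i = vertexSign s i}

lemma mem_subcube {v : ι → SignType} {s : ι → Bool} :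
    s ∈ subcube v ↔ ∀ i, v i = 0 ∨ v i = vertexSign s i := by
  simp [subcube]

lemma subcube_nonempty (v : ι → SignType) : (subcube v).Nonempty :=
  ⟨fun i => decide (v i = 1), mem_subcube.2 fun i => by
    cases h : v i <;> simp [vertexSign, h]⟩

lemma subcube_zero : subcube (0 : ι → SignType) = univ := by
  ext s; simp [mem_subcube]

lemma mem_subcube_update_not {v : ι → SignType} {l : ι} (hvl : v l = 0) {s : ι → Bool}
    (hs : s ∈ subcube v) : update s l (!s l) ∈ subcube v := by
  refine mem_subcube.2 fun i => ?_
  rcases eq_or_ne i l with rfl | hil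
  · exact .inl hvl
  · rw [vertexSign_update_of_ne hil]; exact mem_subcube.1 hs i

lemma disjoint_subcube_of_neg {v w : ι → SignType} {i : ι} (hv : v i ≠ 0) (hw : w i = -v i) :
    Disjoint (subcube v) (subcube w) := by
  refine Finset.disjoint_left.2 fun s hsv hsw => ?_
  have hsv := (mem_subcube.1 hsv i).resolve_left hv
  have hsw := (mem_subcube.1 hsw i).resolve_left (by rw [hw]; revert hv; cases v i <;> decide)
  rw [hw, hsv] at hsw
  have := vertexSign_ne_zero s i
  generalize vertexSign s i = σ at *
  cases σ <;> simp_all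

/-- When `v l = 0`, flipping `s l` is a sign-reversing involution of the subcube. -/
lemma sum_subcube_vertexSign_mul (v : ι → SignType) (l : ι) (f : (ι → Bool) → ℝ)
    (hf : ∀ s, f (update s l (!s l)) = f s) :
    ∑ s ∈ subcube v, (vertexSign s l : ℝ) * f s = v l * ∑ s ∈ subcube v, f s := by
  by_cases hvl : v l = 0
  · rw [hvl, SignType.coe_zero, zero_mul]
    refine sum_involution (fun s _ => update s l (!s l)) (fun s _ => ?_) (fun s _ _ => ?_)
      (fun s hs => mem_subcube_update_not hvl hs) (fun s _ => by simp)
    · rw [hf, vertexSign_update_not_self, SignType.coe_neg]; ring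
    · intro hs; simpa using congrFun hs l
  · rw [mul_sum]
    refine sum_congr rfl fun s hs => ?_
    rw [((mem_subcube.1 hs l).resolve_left hvl)]

def IsSubcubePartition (v : α → ι → SignType) (V : Finset α) : Prop :=
  ∀ s : ι → Bool, ∃! a, a ∈ V ∧ s ∈ subcube (v a)

namespace IsSubcubePartition

variable {v : α → ι → SignType} {V : Finset α}

lemma eq_of_mem_subcube (h : IsSubcubePartition v V) {a b : α} {s : ι → Bool} (ha : a ∈ V)
    (hb : b ∈ V) (hsa : s ∈ subcube (v a)) (hsb : s ∈ subcube (v b)) : a = b :=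
  (h s).unique ⟨ha, hsa⟩ ⟨hb, hsb⟩

lemma sum_sum_subcube (h : IsSubcubePartition v V) (f : (ι → Bool) → ℝ) :
    ∑ a ∈ V, ∑ s ∈ subcube (v a), f s = ∑ s, f s := by
  classical
  rw [sum_comm' (t' := univ) (s' := fun s => {a ∈ V | s ∈ subcube (v a)}) (by simp)]
  refine sum_congr rfl fun s _ => ?_
  obtain ⟨a, ha, huniq⟩ := h s
  rw [eq_singleton_iff_unique_mem.2 ⟨mem_filter.2 ha, fun b hb => huniq b (mem_filter.1 hb)⟩,
    sum_singleton]

lemma sum_mul_card_subcube (h : IsSubcubePartition v V) (l : ι) :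
    ∑ a ∈ V, (v a l : ℝ) * #(subcube (v a)) = 0 := by
  have key (u : ι → SignType) :
      (u l : ℝ) * #(subcube u) = ∑ s ∈ subcube u, (vertexSign s l : ℝ) * 1 := by
    rw [sum_subcube_vertexSign_mul u l _ fun _ => rfl]; simp
  simp_rw [key, h.sum_sum_subcube, ← subcube_zero, ← key, Pi.zero_apply, SignType.coe_zero,
    zero_mul]

lemma sum_mul_mul_card_subcube (h : IsSubcubePartition v V) {l l' : ι} (hll' : l ≠ l') :
    ∑ a ∈ V, (v a l : ℝ) * v a l' * #(subcube (v a)) = 0 := by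
  have key (u : ι → SignType) : (u l : ℝ) * u l' * #(subcube u) =
      ∑ s ∈ subcube u, (vertexSign s l : ℝ) * (vertexSign s l' * 1) := by
    rw [sum_subcube_vertexSign_mul u l _ fun s => by rw [vertexSign_update_of_ne hll'.symm],
      sum_subcube_vertexSign_mul u l' _ fun _ => rfl]
    simp [mul_assoc]
  simp_rw [key, h.sum_sum_subcube, ← subcube_zero, ← key, Pi.zero_apply, SignType.coe_zero,
    zero_mul]

lemma exists_eq_one_of_eq_neg_one (h : IsSubcubePartition v V) {a : α} (ha : a ∈ V) {l : ι}
    (hal : v a l = -1) : ∃ b ∈ V, v b l = 1 := by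
  obtain ⟨s, hs⟩ := subcube_nonempty (v a)
  have hsl : vertexSign s l = -1 :=
    ((mem_subcube.1 hs l).resolve_left (by simp [hal])).symm.trans hal
  obtain ⟨b, ⟨hb, hsb⟩, -⟩ := h (update s l (!s l))
  refine ⟨b, hb, ?_⟩
  rcases (mem_subcube.1 hsb l) with hbl | hbl
  · have : s ∈ subcube (v b) := by simpa using mem_subcube_update_not hbl hsb
    rw [h.eq_of_mem_subcube ha hb hs this, hbl] at hal
    exact absurd hal (by decide)
  · rw [hbl, vertexSign_update_not_self, hsl]; rfl

/-- The parts meeting the half-cube `{s | s j = true}`, with their `j`-th sign forgotten, partition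
the cube again. -/
lemma filter_update_zero (h : IsSubcubePartition v V) (j : ι) :
    IsSubcubePartition (fun a => update (v a) j 0) {a ∈ V | v a j ≠ -1} := by
  have lift {a : α} {s : ι → Bool} (haj : v a j ≠ -1) :
      s ∈ subcube (update (v a) j 0) ↔ update s j true ∈ subcube (v a) := by
    simp only [mem_subcube]
    refine forall_congr' fun i => ?_
    rcases eq_or_ne i j with rfl | hij
    · revert haj; cases v a i <;> simp [vertexSign]
    · simp [update_of_ne hij, vertexSign_update_of_ne hij]
  intro s
  obtain ⟨a, ⟨ha, hsa⟩, huniq⟩ := h (update s j true)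
  have haj : v a j ≠ -1 := by
    rcases mem_subcube.1 hsa j with h0 | h1 <;> simp [*, vertexSign]
  refine ⟨a, ⟨mem_filter.2 ⟨ha, haj⟩, (lift haj).2 hsa⟩, fun b ⟨hb, hsb⟩ => ?_⟩
  have hb := mem_filter.1 hb
  exact huniq b ⟨hb.1, (lift hb.2).1 hsb⟩

/-- For the weights `#(subcube (v a))`, the moment identities make the columns `1` and `v · l`
(`l ∈ E`) over the parts meeting `E` pairwise orthogonal. -/
theorem card_add_one_le (h : IsSubcubePartition v V) {E : Finset ι} (hE : E.Nonempty)
    (hEV : ∀ l ∈ E, ∃ a ∈ V, v a l ≠ 0) : #E + 1 ≤ #{a ∈ V | ∃ l ∈ E, v a l ≠ 0} := by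
  set B := {a ∈ V | ∃ l ∈ E, v a l ≠ 0}
  have sum_B {l : ι} (hl : l ∈ E) (f : α → ℝ) :
      ∑ a ∈ B, (v a l : ℝ) * f a = ∑ a ∈ V, (v a l : ℝ) * f a :=
    sum_filter_of_ne fun a _ hne => ⟨l, hl, fun h0 => hne (by simp [h0])⟩
  have hu (l : ι) (hl : l ∈ E) : ∃ a ∈ B, (v a l : ℝ) ≠ 0 := by
    obtain ⟨a, ha, hal⟩ := hEV l hl
    exact ⟨a, mem_filter.2 ⟨ha, l, hl, hal⟩, by revert hal; cases v a l <;> simp⟩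
  have := card_le_card_of_orthogonal B (fun a => #(subcube (v a)))
    (fun (k : Option E) a => k.elim 1 fun l => (v a l : ℝ))
    (fun a _ => by simpa using subcube_nonempty (v a)) ?_ ?_
  · simpa using this
  · rintro (_ | ⟨l, hl⟩)
    · obtain ⟨l, hl⟩ := hE
      obtain ⟨a, ha, -⟩ := hu l hl
      exact ⟨a, ha, one_ne_zero⟩
    · exact hu l hl
  · rintro (_ | ⟨l, hl⟩) (_ | ⟨l', hl'⟩) hne
    · exact absurd rfl hne
    · simpa [sum_B hl', mul_comm] using h.sum_mul_card_subcube l'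
    · simpa [sum_B hl, mul_comm] using h.sum_mul_card_subcube l
    · have hll' : l ≠ l' := fun e => hne (by simp [e])
      simpa [sum_B hl, mul_comm, mul_left_comm, mul_assoc] using h.sum_mul_mul_card_subcube hll'

end IsSubcubePartition

end SubcubePartition

lemma exists_pos_forall_dist_lt_imp_eq {D : Set ℝ} {d : ℝ} (hd : 0 < d)
    (hD : ∀ r₁ ∈ D, ∀ r₂ ∈ D, r₁ ≠ r₂ → d < |r₁ - r₂|) (t : ℝ) :
    ∃ δ > 0, ∀ r ∈ D, dist r t < δ → r = t := by
  set S := {r ∈ D | r ≠ t ∧ dist r t < d / 2}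
  have hS : S.Subsingleton := fun r₁ h₁ r₂ h₂ => by
    by_contra hne
    have := dist_triangle_right r₁ r₂ t
    rw [Real.dist_eq] at this
    linarith [hD r₁ h₁.1 r₂ h₂.1 hne, h₁.2.2, h₂.2.2]
  have : Metric.ball t (d / 2) ∩ Sᶜ ∈ 𝓝 t :=
    inter_mem (Metric.ball_mem_nhds t (by positivity))
      (hS.finite.isClosed.compl_mem_nhds fun h => h.2.1 rfl)
  obtain ⟨δ, hδ, hball⟩ := Metric.mem_nhds_iff.1 this
  exact ⟨δ, hδ, fun r hr hrt => by_contra fun hne => (hball hrt).2 ⟨hr, hne, (hball hrt).1⟩⟩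

section RegulatedPartition

variable {ι : Type*} {P : Set (Set (ι → ℝ))} {Q Q₁ Q₂ : Set (ι → ℝ)} {x : ι → ℝ}

/-- The boundary incidence sequence of `x` in `Q` (cf. `IsBIS`), reading the corners of a rectangle
`Q` off as `sInf Q` and `sSup Q`. -/
noncomputable def boundarySign (Q : Set (ι → ℝ)) (x : ι → ℝ) (i : ι) : SignType :=
  if x i = sInf Q i then 1 else if x i = sSup Q i then -1 else 0

section boundarySign

variable {i j : ι}

lemma boundarySign_eq_zero_iff : boundarySign Q x i = 0 ↔ x i ≠ sInf Q i ∧ x i ≠ sSup Q i := by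
  unfold boundarySign; split_ifs <;> simp_all

lemma boundarySign_eq_one_iff : boundarySign Q x i = 1 ↔ x i = sInf Q i := by
  unfold boundarySign; split_ifs <;> simp_all

lemma boundarySign_eq_neg_one_iff (h : sInf Q i ≠ sSup Q i) :
    boundarySign Q x i = -1 ↔ x i = sSup Q i := by
  unfold boundarySign; split_ifs <;> simp_all

lemma boundarySign_update_of_ne [DecidableEq ι] (h : i ≠ j) (c : ℝ) :
    boundarySign Q (update x j c) i = boundarySign Q x i := by
  simp [boundarySign, update_of_ne h]

end boundarySign

namespace IsRegPartition

lemma exists_mem (hP : IsRegPartition P) (x : ι → ℝ) : ∃ Q ∈ P, x ∈ Q := hP.2.1 x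

lemma eq_Icc (hP : IsRegPartition P) (hQ : Q ∈ P) : Q = Set.Icc (sInf Q) (sSup Q) := by
  obtain ⟨⟨_, _, _, _, hPD⟩, -, -⟩ := hP
  obtain ⟨a, b, hab, rfl⟩ := hPD Q hQ
  have hle : a ≤ b := fun i => (hab i).2.2.le
  rw [csInf_Icc hle, csSup_Icc hle]

lemma sInf_lt_sSup (hP : IsRegPartition P) (hQ : Q ∈ P) (i : ι) : sInf Q i < sSup Q i := by
  obtain ⟨⟨_, _, _, _, hPD⟩, -, -⟩ := hP
  obtain ⟨a, b, hab, rfl⟩ := hPD Q hQ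
  have hle : a ≤ b := fun i => (hab i).2.2.le
  rw [csInf_Icc hle, csSup_Icc hle]
  exact (hab i).2.2

lemma mem_iff (hP : IsRegPartition P) (hQ : Q ∈ P) :
    x ∈ Q ↔ ∀ i, sInf Q i ≤ x i ∧ x i ≤ sSup Q i := by
  conv_lhs => rw [hP.eq_Icc hQ]
  simp only [Set.mem_Icc, Pi.le_def, forall_and]

lemma update_mem [DecidableEq ι] (hP : IsRegPartition P) (hQ : Q ∈ P) (hx : x ∈ Q) {j : ι}
    {c : ℝ} (h₁ : sInf Q j ≤ c) (h₂ : c ≤ sSup Q j) : update x j c ∈ Q := by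
  refine (hP.mem_iff hQ).2 fun i => ?_
  rcases eq_or_ne i j with rfl | hij
  · simpa using ⟨h₁, h₂⟩
  · simpa [update_of_ne hij] using (hP.mem_iff hQ).1 hx i

lemma boundarySign_eq_neg_one_and_eq_one (hP : IsRegPartition P) (hQ₁ : Q₁ ∈ P) (hQ₂ : Q₂ ∈ P)
    (hx₁ : x ∈ Q₁) (hx₂ : x ∈ Q₂) {i : ι} (h : sSup Q₁ i ≤ sInf Q₂ i) :
    boundarySign Q₁ x i = -1 ∧ boundarySign Q₂ x i = 1 := by
  have h₁ := (hP.mem_iff hQ₁).1 hx₁ i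
  have h₂ := (hP.mem_iff hQ₂).1 hx₂ i
  exact ⟨(boundarySign_eq_neg_one_iff (hP.sInf_lt_sSup hQ₁ i).ne).2 (by linarith),
    boundarySign_eq_one_iff.2 (by linarith)⟩

lemma isBoundaryVector_iff (hP : IsRegPartition P) {j : ι} :
    IsBoundaryVector P x j ↔ ∃ Q ∈ P, x ∈ Q ∧ boundarySign Q x j ≠ 0 := by
  constructor
  · rintro ⟨Q, hQ, F, ⟨a, b, hab, rfl, hF⟩, hxF⟩
    have hle : a ≤ b := fun i => (hab i).le
    refine ⟨_, hQ, ?_⟩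
    rw [Ne, boundarySign_eq_zero_iff, csInf_Icc hle, csSup_Icc hle]
    rcases hF with rfl | rfl
    exacts [⟨hxF.1, fun h => h.1 hxF.2⟩, ⟨hxF.1, fun h => h.2 hxF.2⟩]
  · rintro ⟨Q, hQ, hxQ, hj⟩
    refine ⟨Q, hQ, ?_⟩
    rw [Ne, boundarySign_eq_zero_iff, not_and_or, not_not, not_not] at hj
    rcases hj with hj | hj
    · exact ⟨_, ⟨_, _, hP.sInf_lt_sSup hQ, hP.eq_Icc hQ, .inl rfl⟩, hxQ, hj⟩
    · exact ⟨_, ⟨_, _, hP.sInf_lt_sSup hQ, hP.eq_Icc hQ, .inr rfl⟩, hxQ, hj⟩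

end IsRegPartition

variable [Fintype ι]

open Classical in
noncomputable def boundaryCoords (P : Set (Set (ι → ℝ))) (x : ι → ℝ) : Finset ι :=
  {i | ∃ Q ∈ P, x ∈ Q ∧ boundarySign Q x i ≠ 0}

lemma mem_boundaryCoords {i : ι} :
    i ∈ boundaryCoords P x ↔ ∃ Q ∈ P, x ∈ Q ∧ boundarySign Q x i ≠ 0 := by
  simp [boundaryCoords]

namespace IsRegPartition

lemma exists_sSup_le_sInf (hP : IsRegPartition P) (hQ₁ : Q₁ ∈ P) (hQ₂ : Q₂ ∈ P)
    (hne : Q₁ ≠ Q₂) : ∃ i, sSup Q₁ i ≤ sInf Q₂ i ∨ sSup Q₂ i ≤ sInf Q₁ i := by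
  have h := hP.2.2 Q₁ hQ₁ Q₂ hQ₂ hne
  rw [hP.eq_Icc hQ₁, hP.eq_Icc hQ₂, ← Set.pi_univ_Icc, ← Set.pi_univ_Icc,
    interior_pi_set Set.finite_univ, interior_pi_set Set.finite_univ, ← Set.pi_inter_distrib,
    Set.univ_pi_eq_empty_iff] at h
  obtain ⟨i, hi⟩ := h
  simp only [interior_Icc, Set.Ioo_inter_Ioo, Set.Ioo_eq_empty_iff, lt_inf_iff, sup_lt_iff,
    not_and_or, not_lt] at hi
  refine ⟨i, ?_⟩
  have := hP.sInf_lt_sSup hQ₁ i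
  have := hP.sInf_lt_sSup hQ₂ i
  rcases hi with (h | h) | (h | h)
  · linarith
  · exact .inl h
  · exact .inr h
  · linarith

lemma eventually_mem_imp_mem (hP : IsRegPartition P) (x : ι → ℝ) :
    ∀ᶠ z in 𝓝 x, ∀ Q ∈ P, z ∈ Q → x ∈ Q := by
  obtain ⟨⟨D, d, hd, hD, hPD⟩, -, -⟩ := hP
  choose δ hδ hδD using fun i => exists_pos_forall_dist_lt_imp_eq hd hD (x i)
  have hnear : ∀ᶠ z in 𝓝 x, ∀ i, dist (z i) (x i) < δ i := eventually_all.2 fun i =>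
    (continuous_apply i).continuousAt.eventually_mem (Metric.ball_mem_nhds (x i) (hδ i))
  refine hnear.mono fun z hz Q hQ hzQ => ?_
  obtain ⟨a, b, hab, rfl⟩ := hPD Q hQ
  refine ⟨fun i => not_lt.1 fun hlt => ?_, fun i => not_lt.1 fun hlt => ?_⟩
  · have := hz i
    rw [Real.dist_eq] at this
    refine hlt.ne' (hδD i _ (hab i).1 ?_)
    rw [Real.dist_eq, abs_of_pos (sub_pos.2 hlt)]
    linarith [le_abs_self (z i - x i), hzQ.1 i]
  · have := hz i
    rw [Real.dist_eq] at this
    refine hlt.ne (hδD i _ (hab i).2.1 ?_)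
    rw [Real.dist_eq, abs_of_neg (sub_neg.2 hlt)]
    linarith [neg_abs_le (z i - x i), hzQ.2 i]

lemma exists_boundarySign_neg (hP : IsRegPartition P) (hQ₁ : Q₁ ∈ P) (hQ₂ : Q₂ ∈ P)
    (hne : Q₁ ≠ Q₂) (hx₁ : x ∈ Q₁) (hx₂ : x ∈ Q₂) :
    ∃ i, boundarySign Q₁ x i ≠ 0 ∧ boundarySign Q₂ x i = -boundarySign Q₁ x i := by
  obtain ⟨i, h | h⟩ := hP.exists_sSup_le_sInf hQ₁ hQ₂ hne
  · obtain ⟨h₁, h₂⟩ := hP.boundarySign_eq_neg_one_and_eq_one hQ₁ hQ₂ hx₁ hx₂ h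
    exact ⟨i, by simp [h₁], by simp [h₁, h₂]⟩
  · obtain ⟨h₂, h₁⟩ := hP.boundarySign_eq_neg_one_and_eq_one hQ₂ hQ₁ hx₂ hx₁ h
    exact ⟨i, by simp [h₁], by simp [h₁, h₂]⟩

lemma finite_members (hP : IsRegPartition P) (x : ι → ℝ) : {Q | Q ∈ P ∧ x ∈ Q}.Finite := by
  classical
  refine Set.Finite.of_finite_image (f := (boundarySign · x)) (Set.toFinite _)
    fun Q₁ h₁ Q₂ h₂ heq => by_contra fun hne => ?_
  obtain ⟨i, hi, hi'⟩ := hP.exists_boundarySign_neg h₁.1 h₂.1 hne h₁.2 h₂.2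
  have := disjoint_subcube_of_neg hi hi'
  rw [show boundarySign Q₂ x = boundarySign Q₁ x from heq.symm, disjoint_self_iff_empty] at this
  exact (subcube_nonempty _).ne_empty this

noncomputable def membersAt (hP : IsRegPartition P) (x : ι → ℝ) : Finset (Set (ι → ℝ)) :=
  (hP.finite_members x).toFinset

@[simp]
lemma mem_membersAt (hP : IsRegPartition P) : Q ∈ hP.membersAt x ↔ Q ∈ P ∧ x ∈ Q :=
  Set.Finite.mem_toFinset _

lemma membersAt_nonempty (hP : IsRegPartition P) (x : ι → ℝ) : (hP.membersAt x).Nonempty :=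
  let ⟨Q, hQ, hxQ⟩ := hP.exists_mem x
  ⟨Q, hP.mem_membersAt.2 ⟨hQ, hxQ⟩⟩

lemma nuP_eq_card (hP : IsRegPartition P) (x : ι → ℝ) : nuP P x = #(hP.membersAt x) :=
  Set.ncard_eq_toFinset_card _ _

lemma betaP_eq_card (hP : IsRegPartition P) (x : ι → ℝ) :
    betaP P x = #(boundaryCoords P x) := by
  rw [betaP, ← Set.ncard_coe_finset]
  congr 1
  ext j
  simp [mem_boundaryCoords, hP.isBoundaryVector_iff]

lemma boundarySign_eq_zero_of_notMem {j : ι} (hj : j ∉ boundaryCoords P x) (hQ : Q ∈ P)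
    (hxQ : x ∈ Q) : boundarySign Q x j = 0 :=
  not_not.1 fun h => hj (mem_boundaryCoords.2 ⟨Q, hQ, hxQ, h⟩)

variable [DecidableEq ι]

/-- Push `x` slightly into the open orthant of `s`. -/
lemma exists_mem_subcube (hP : IsRegPartition P) (x : ι → ℝ) (s : ι → Bool) :
    ∃ Q ∈ P, x ∈ Q ∧ s ∈ subcube (boundarySign Q x) := by
  set e : ι → ℝ := fun i => vertexSign s i
  have hpath : Tendsto (fun ε : ℝ => x + ε • e) (𝓝[>] 0) (𝓝 x) := by
    have : Continuous (fun ε : ℝ => x + ε • e) := by fun_prop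
    simpa using (this.tendsto 0).mono_left nhdsWithin_le_nhds
  obtain ⟨ε, hεP, hε⟩ :=
    ((hpath.eventually (hP.eventually_mem_imp_mem x)).and self_mem_nhdsWithin).exists
  obtain ⟨Q, hQ, hzQ⟩ := hP.exists_mem (x + ε • e)
  refine ⟨Q, hQ, hεP Q hQ hzQ, mem_subcube.2 fun i => ?_⟩
  have hz := (hP.mem_iff hQ).1 hzQ i
  have hε : (0 : ℝ) < ε := hε
  unfold boundarySign
  cases hs : s i <;> split_ifs with h₁ h₂ <;> simp_all [e, vertexSign] <;> linarith

lemma isSubcubePartition (hP : IsRegPartition P) (x : ι → ℝ) :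
    IsSubcubePartition (boundarySign · x) (hP.membersAt x) := by
  intro s
  obtain ⟨Q, hQ, hxQ, hs⟩ := hP.exists_mem_subcube x s
  refine ⟨Q, ⟨hP.mem_membersAt.2 ⟨hQ, hxQ⟩, hs⟩, fun Q' ⟨hQ', hs'⟩ => by_contra fun hne => ?_⟩
  obtain ⟨i, hi, hi'⟩ := hP.exists_boundarySign_neg (hP.mem_membersAt.1 hQ').1 hQ hne
    (hP.mem_membersAt.1 hQ').2 hxQ
  exact Finset.disjoint_left.1 (disjoint_subcube_of_neg hi hi') hs' hs

lemma card_boundaryCoords_add_one_le (hP : IsRegPartition P) (x : ι → ℝ) :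
    #(boundaryCoords P x) + 1 ≤ #(hP.membersAt x) := by
  rcases (boundaryCoords P x).eq_empty_or_nonempty with h | h
  · simpa [h] using hP.membersAt_nonempty x
  · refine ((hP.isSubcubePartition x).card_add_one_le h fun l hl => ?_).trans (card_filter_le _ _)
    obtain ⟨Q, hQ, hxQ, hl⟩ := mem_boundaryCoords.1 hl
    exact ⟨Q, hP.mem_membersAt.2 ⟨hQ, hxQ⟩, hl⟩

variable {j : ι} {t : ℝ}

/-- If `R` started below height `t`, at its bottom face it would overlap a member containing `x`:
the members containing `x` still make up the whole local picture there. -/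
lemma boundarySign_update_self_eq_one (hP : IsRegPartition P) (hj : j ∉ boundaryCoords P x)
    (hxt : x j < t) (ht : ∀ Q ∈ P, x ∈ Q → t ≤ sSup Q j) {R : Set (ι → ℝ)} (hR : R ∈ P)
    (hyR : update x j t ∈ R) (hxR : x ∉ R) : boundarySign R (update x j t) j = 1 := by
  have hRj := (hP.mem_iff hR).1 hyR j
  rw [update_self] at hRj
  have hxR' : x j < sInf R j := not_le.1 fun h => hxR <| by
    simpa [update_idem] using hP.update_mem hR hyR h (by linarith)
  rw [boundarySign_eq_one_iff, update_self]
  by_contra hne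
  set c := sInf R j
  have hct : c < t := lt_of_le_of_ne hRj.1 (Ne.symm hne)
  have hpR : update x j c ∈ R := by
    simpa only [update_idem] using hP.update_mem hR hyR le_rfl (hRj.1.trans hRj.2)
  obtain ⟨s, hs⟩ := subcube_nonempty (boundarySign R (update x j c))
  obtain ⟨Q, hQ, hxQ, hsQ⟩ := hP.exists_mem_subcube x s
  have hQx := boundarySign_eq_zero_of_notMem hj hQ hxQ
  have hQj := (hP.mem_iff hQ).1 hxQ j
  have hlt : sInf Q j < x j := lt_of_le_of_ne hQj.1 (Ne.symm (boundarySign_eq_zero_iff.1 hQx).1)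
  have hpQ : update x j c ∈ Q := hP.update_mem hQ hxQ (by linarith) (by linarith [ht Q hQ hxQ])
  have hsign : boundarySign Q (update x j c) = boundarySign Q x := by
    funext i
    rcases eq_or_ne i j with rfl | hij
    · rw [hQx, boundarySign_eq_zero_iff, update_self]
      constructor <;> intro h <;> linarith [ht Q hQ hxQ]
    · exact boundarySign_update_of_ne hij c
  rw [← hsign] at hsQ
  have := (hP.isSubcubePartition _).eq_of_mem_subcube (hP.mem_membersAt.2 ⟨hR, hpR⟩)
    (hP.mem_membersAt.2 ⟨hQ, hpQ⟩) hs hsQ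
  exact hxR (this ▸ hxQ)

lemma exists_mem_update_notMem (hP : IsRegPartition P) (hxt : x j < t) (hQ : Q ∈ P)
    (hxQ : x ∈ Q) (hQt : sSup Q j = t) : ∃ R ∈ hP.membersAt (update x j t), x ∉ R := by
  have hQj := (hP.mem_iff hQ).1 hxQ j
  have hyQ : update x j t ∈ Q := hP.update_mem hQ hxQ (by linarith) hQt.ge
  have hQ₁ : boundarySign Q (update x j t) j = -1 :=
    (boundarySign_eq_neg_one_iff (hP.sInf_lt_sSup hQ j).ne).2 (by simp [hQt])
  obtain ⟨R, hR, hR₁⟩ := (hP.isSubcubePartition _).exists_eq_one_of_eq_neg_one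
    (hP.mem_membersAt.2 ⟨hQ, hyQ⟩) hQ₁
  refine ⟨R, hR, fun hxR => ?_⟩
  rw [boundarySign_eq_one_iff, update_self] at hR₁
  linarith [((hP.mem_iff (hP.mem_membersAt.1 hR).1).1 hxR j).1]

lemma membersAt_subset_membersAt_update (hP : IsRegPartition P) (hxt : x j ≤ t)
    (ht : ∀ Q ∈ P, x ∈ Q → t ≤ sSup Q j) : hP.membersAt x ⊆ hP.membersAt (update x j t) :=
  fun Q hQ => by
    obtain ⟨hQ, hxQ⟩ := hP.mem_membersAt.1 hQ
    exact hP.mem_membersAt.2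
      ⟨hQ, hP.update_mem hQ hxQ (((hP.mem_iff hQ).1 hxQ j).1.trans hxt) (ht Q hQ hxQ)⟩

lemma insert_boundaryCoords_subset (hP : IsRegPartition P) (hxt : x j < t)
    (ht : ∀ Q ∈ P, x ∈ Q → t ≤ sSup Q j) (hQ : Q ∈ P) (hxQ : x ∈ Q) (hQt : sSup Q j = t) :
    insert j (boundaryCoords P x) ⊆ boundaryCoords P (update x j t) := by
  intro i hi
  rw [mem_boundaryCoords]
  rcases eq_or_ne i j with rfl | hij
  · refine ⟨Q, hQ, hP.update_mem hQ hxQ (by linarith [((hP.mem_iff hQ).1 hxQ i).1]) hQt.ge, ?_⟩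
    rw [(boundarySign_eq_neg_one_iff (hP.sInf_lt_sSup hQ i).ne).2 (by simp [hQt])]
    decide
  · obtain ⟨R, hR, hxR, hRi⟩ := mem_boundaryCoords.1 ((mem_insert.1 hi).resolve_left hij)
    refine ⟨R, hR, hP.update_mem hR hxR (by linarith [((hP.mem_iff hR).1 hxR j).1])
      (ht R hR hxR), ?_⟩
    rwa [boundarySign_update_of_ne hij]

open Classical in
/-- Every coordinate that becomes a boundary coordinate at `update x j t` is a boundary
coordinate of a new member; the new members form the upper half of the local picture there,
so the subcube-partition bound applies to them. -/
lemma card_sdiff_add_one_le (hP : IsRegPartition P) (hj : j ∉ boundaryCoords P x)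
    (hxt : x j < t) (ht : ∀ Q ∈ P, x ∈ Q → t ≤ sSup Q j) (hQ : Q ∈ P) (hxQ : x ∈ Q)
    (hQt : sSup Q j = t) :
    #(boundaryCoords P (update x j t) \ insert j (boundaryCoords P x)) + 1 ≤
      #(hP.membersAt (update x j t) \ hP.membersAt x) := by
  set E := boundaryCoords P (update x j t) \ insert j (boundaryCoords P x)
  have hE {l : ι} (hl : l ∈ E) : l ≠ j ∧ l ∉ boundaryCoords P x := by
    simpa [E, not_or] using (mem_sdiff.1 hl).2
  have old {R : Set (ι → ℝ)} (hR : R ∈ P) (hxR : x ∈ R) {l : ι} (hl : l ∈ E) :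
      boundarySign R (update x j t) l = 0 := by
    rw [boundarySign_update_of_ne (hE hl).1]
    exact boundarySign_eq_zero_of_notMem (hE hl).2 hR hxR
  rcases E.eq_empty_or_nonempty with hE₀ | hE₀
  · obtain ⟨R, hR, hxR⟩ := hP.exists_mem_update_notMem hxt hQ hxQ hQt
    simpa [hE₀] using ⟨R, mem_sdiff.2 ⟨hR, fun h => hxR (hP.mem_membersAt.1 h).2⟩⟩
  have hupper := (hP.isSubcubePartition (update x j t)).filter_update_zero j
  refine (hupper.card_add_one_le hE₀ fun l hl => ?_).trans (card_le_card fun R hR => ?_)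
  · obtain ⟨R, hR, hyR, hRl⟩ := mem_boundaryCoords.1 (mem_sdiff.1 hl).1
    have hxR : x ∉ R := fun hxR => hRl (old hR hxR hl)
    refine ⟨R, mem_filter.2 ⟨hP.mem_membersAt.2 ⟨hR, hyR⟩, ?_⟩,
      by simpa [update_of_ne (hE hl).1]⟩
    rw [hP.boundarySign_update_self_eq_one hj hxt ht hR hyR hxR]
    decide
  · simp only [mem_filter] at hR
    obtain ⟨⟨hRy, -⟩, l, hl, hRl⟩ := hR
    refine mem_sdiff.2 ⟨hRy, fun hRx => hRl ?_⟩
    rw [update_of_ne (hE hl).1]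
    exact old (hP.mem_membersAt.1 hRy).1 (hP.mem_membersAt.1 hRx).2 hl

/-- Slide `x` along the free coordinate `j` up to the first top face of a member containing it. -/
lemma exists_card_boundaryCoords_lt (hP : IsRegPartition P) (x : ι → ℝ) {j : ι}
    (hj : j ∉ boundaryCoords P x) :
    ∃ y, #(boundaryCoords P x) < #(boundaryCoords P y) ∧
      #(hP.membersAt x) + #(boundaryCoords P y) ≤ #(hP.membersAt y) + #(boundaryCoords P x) := by
  classical
  obtain ⟨Q, hQ, hmin⟩ :=
    (hP.membersAt x).exists_min_image (fun Q => sSup Q j) (hP.membersAt_nonempty x)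
  obtain ⟨hQ, hxQ⟩ := hP.mem_membersAt.1 hQ
  have hxt : x j < sSup Q j := lt_of_le_of_ne ((hP.mem_iff hQ).1 hxQ j).2
    (boundarySign_eq_zero_iff.1 (boundarySign_eq_zero_of_notMem hj hQ hxQ)).2
  have ht : ∀ R ∈ P, x ∈ R → sSup Q j ≤ sSup R j :=
    fun R hR hxR => hmin R (hP.mem_membersAt.2 ⟨hR, hxR⟩)
  have hcoords := card_sdiff_add_card_eq_card (hP.insert_boundaryCoords_subset hxt ht hQ hxQ rfl)
  rw [card_insert_of_notMem hj] at hcoords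
  have hmembers := card_sdiff_add_card_eq_card (hP.membersAt_subset_membersAt_update hxt.le ht)
  have hnew := hP.card_sdiff_add_one_le hj hxt ht hQ hxQ rfl
  exact ⟨update x j (sSup Q j), by omega, by omega⟩

lemma card_membersAt_le (hP : IsRegPartition P)
    (hmax : ∀ z, #(hP.membersAt z) ≤ Fintype.card ι + 1) (x : ι → ℝ) :
    #(hP.membersAt x) ≤ #(boundaryCoords P x) + 1 := by
  induction hk : Fintype.card ι - #(boundaryCoords P x) using Nat.strong_induction_on
    generalizing x with
  | _ k ih =>
    by_cases hfull : boundaryCoords P x = univ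
    · simpa [hfull] using hmax x
    obtain ⟨j, hj⟩ : ∃ j, j ∉ boundaryCoords P x := by simpa [eq_univ_iff_forall] using hfull
    obtain ⟨y, hlt, hle⟩ := hP.exists_card_boundaryCoords_lt x hj
    have := ih _ (by have := card_le_univ (boundaryCoords P y); omega) y rfl
    omega

end IsRegPartition

end RegulatedPartition

/-- a regulated partition of `ℝⁿ` is minimal (i.e. `(n+1)`-regulated) iff
`ν_P(x) = β_P(x) + 1` for every `x`. -/
theorem stmt8 (n : ℕ) (P : Set (Set (Fin n → ℝ))) (hP : IsRegPartition P) :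
    (∀ x : Fin n → ℝ, ∀ T : Finset (Set (Fin n → ℝ)),
        (∀ Q ∈ T, Q ∈ P ∧ x ∈ Q) → T.card ≤ n + 1) ↔
      (∀ x : Fin n → ℝ, nuP P x = betaP P x + 1) := by
  simp_rw [hP.nuP_eq_card, hP.betaP_eq_card]
  constructor
  · intro hmax x
    have hle := hP.card_membersAt_le
      (fun z => by simpa using hmax z _ fun Q => hP.mem_membersAt.1) x
    have hge := hP.card_boundaryCoords_add_one_le x
    omega
  · intro heq x T hT
    calc #T ≤ #(hP.membersAt x) := card_le_card fun Q hQ => hP.mem_membersAt.2 (hT Q hQ)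
      _ = #(boundaryCoords P x) + 1 := heq x
      _ ≤ n + 1 := by simpa using card_le_univ (boundaryCoords P x)
end
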